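/- arXiv:1009.1312 — 5 statements merged into one kernel-verified Lean document; each statement's English description precedes it below -/
import Mathlib

section
/- If F has finite second moment, then for i ≤ j the covariance of the partial maxima satisfies Cov[X_{i:i}, X_{j:j}] = ∫∫_{x<y} F^i(x) (F^{j-i}(x) + F^{j-i}(y)) (1 - F^i(y)) dy dx, which is finite and non-negative. -/
open MeasureTheory ProbabilityTheory Set

/-!
Every real `u` is the integral `∫ (1{x < u} - 1{x < 0}) dx`. Applying Fubini to `U V` and to `U`,
`V` separately turns `Cov[U, V]` into the integral over the plane of the covariance of the
indicators of `{U > x}` and `{V > y}`, which is `P(U ≤ x, V ≤ y) - P(U ≤ x) P(V ≤ y)`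
(Hoeffding's identity). For partial maxima of i.i.d. variables with distribution function `F`,
independence gives `P(X_{i:i} ≤ x, X_{j:j} ≤ y) = F(min x y)^i F(y)^(j-i)` and
`P(X_{k:k} ≤ t) = F(t)^k`. Folding the plane along the (null) diagonal and adding the two halves
gives the stated integrand over `x < y`, which is non-negative because `0 ≤ F ≤ 1`.
-/

noncomputable def layer (u x : ℝ) : ℝ := (if x < u then 1 else 0) - (if x < 0 then 1 else 0)

lemma layer_eq_indicator_sub (u : ℝ) :
    layer u = (Ico 0 u).indicator 1 - (Ico u 0).indicator 1 := by
  ext x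
  simp only [layer, Pi.sub_apply, indicator_apply, mem_Ico, Pi.one_apply]
  split_ifs <;> grind

lemma abs_layer (u x : ℝ) :
    |layer u x| = (Ico 0 u).indicator 1 x + (Ico u 0).indicator 1 x := by
  simp only [layer, indicator_apply, mem_Ico, Pi.one_apply]
  split_ifs <;> grind

lemma integrable_indicator_Ico_one (a b : ℝ) : Integrable ((Ico a b).indicator (1 : ℝ → ℝ)) :=
  (integrable_indicator_iff measurableSet_Ico).2 (integrableOn_const measure_Ico_lt_top.ne)

lemma integral_indicator_Ico_one (a b : ℝ) :
    ∫ x, (Ico a b).indicator (1 : ℝ → ℝ) x = max (b - a) 0 := by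
  rw [integral_indicator_one measurableSet_Ico, Real.volume_real_Ico]

lemma integrable_layer (u : ℝ) : Integrable (layer u) := by
  rw [layer_eq_indicator_sub]
  exact (integrable_indicator_Ico_one 0 u).sub (integrable_indicator_Ico_one u 0)

lemma integral_layer (u : ℝ) : ∫ x, layer u x = u := by
  rw [layer_eq_indicator_sub, integral_sub' (integrable_indicator_Ico_one 0 u)
    (integrable_indicator_Ico_one u 0), integral_indicator_Ico_one, integral_indicator_Ico_one]
  rcases le_total 0 u with h | h <;> simp [h]

lemma integral_abs_layer (u : ℝ) : ∫ x, |layer u x| = |u| := by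
  simp_rw [abs_layer]
  rw [integral_add (integrable_indicator_Ico_one 0 u) (integrable_indicator_Ico_one u 0),
    integral_indicator_Ico_one, integral_indicator_Ico_one]
  rcases le_total 0 u with h | h <;> simp [h, abs_of_nonneg, abs_of_nonpos]

section Hoeffding

variable {Ω : Type*} {U V : Ω → ℝ}

lemma layer_comp_eq_indicator_sub (U : Ω → ℝ) (x : ℝ) :
    (fun ω => layer (U ω) x) = fun ω => {ω | x < U ω}.indicator 1 ω - (if x < 0 then 1 else 0) := by
  ext ω
  simp [layer, indicator_apply]

variable [MeasurableSpace Ω] {P : Measure Ω}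

lemma measurable_layer_comp (hU : Measurable U) :
    Measurable fun q : Ω × ℝ => layer (U q.1) q.2 :=
  (measurable_const.ite (measurableSet_lt measurable_snd (hU.comp measurable_fst))
    measurable_const).sub
    (measurable_const.ite (measurableSet_lt measurable_snd measurable_const) measurable_const)

lemma integrable_layer_comp (hUm : Measurable U) (hU : Integrable U P) :
    Integrable (fun q : Ω × ℝ => layer (U q.1) q.2) (P.prod volume) :=
  (integrable_prod_iff (measurable_layer_comp hUm).aestronglyMeasurable).2
    ⟨ae_of_all _ fun ω => integrable_layer (U ω),
      hU.abs.congr (ae_of_all _ fun ω => by simp [Real.norm_eq_abs, integral_abs_layer])⟩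

lemma integrable_layer_comp_mul_layer_comp (hUm : Measurable U) (hVm : Measurable V)
    (hUV : Integrable (fun ω => U ω * V ω) P) :
    Integrable (fun q : Ω × (ℝ × ℝ) => layer (U q.1) q.2.1 * layer (V q.1) q.2.2)
      (P.prod volume) := by
  have hm : Measurable fun q : Ω × (ℝ × ℝ) => layer (U q.1) q.2.1 * layer (V q.1) q.2.2 :=
    ((measurable_layer_comp hUm).comp (measurable_fst.prodMk measurable_snd.fst)).mul
      ((measurable_layer_comp hVm).comp (measurable_fst.prodMk measurable_snd.snd))
  rw [Measure.volume_eq_prod]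
  refine (integrable_prod_iff hm.aestronglyMeasurable).2
    ⟨ae_of_all _ fun ω => (integrable_layer (U ω)).mul_prod (integrable_layer (V ω)),
      hUV.abs.congr (ae_of_all _ fun ω => ?_)⟩
  simp only [norm_mul, Real.norm_eq_abs]
  rw [integral_prod_mul (fun x => |layer (U ω) x|) (fun y => |layer (V ω) y|),
    integral_abs_layer, integral_abs_layer, abs_mul]

lemma integral_eq_integral_integral_layer [SFinite P] (hUm : Measurable U) (hU : Integrable U P) :
    ∫ ω, U ω ∂P = ∫ x, ∫ ω, layer (U ω) x ∂P := by
  rw [← integral_integral_swap (f := fun ω x => layer (U ω) x) (integrable_layer_comp hUm hU)]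
  simp_rw [integral_layer]

lemma integral_mul_eq_integral_integral_layer [SFinite P] (hUm : Measurable U) (hVm : Measurable V)
    (hUV : Integrable (fun ω => U ω * V ω) P) :
    ∫ ω, U ω * V ω ∂P = ∫ p : ℝ × ℝ, ∫ ω, layer (U ω) p.1 * layer (V ω) p.2 ∂P := by
  rw [← integral_integral_swap (f := fun ω (p : ℝ × ℝ) => layer (U ω) p.1 * layer (V ω) p.2)
    (integrable_layer_comp_mul_layer_comp hUm hVm hUV)]
  congr 1 with ω
  rw [Measure.volume_eq_prod, integral_prod_mul (fun x => layer (U ω) x)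
    (fun y => layer (V ω) y), integral_layer, integral_layer]

lemma integrable_integral_layer_comp [SFinite P] (hUm : Measurable U) (hU : Integrable U P) :
    Integrable fun x => ∫ ω, layer (U ω) x ∂P :=
  (integrable_layer_comp hUm hU).swap.integral_prod_left

lemma integrable_integral_layer_comp_mul_layer_comp [SFinite P] (hUm : Measurable U)
    (hVm : Measurable V) (hUV : Integrable (fun ω => U ω * V ω) P) :
    Integrable fun p : ℝ × ℝ => ∫ ω, layer (U ω) p.1 * layer (V ω) p.2 ∂P :=
  (integrable_layer_comp_mul_layer_comp hUm hVm hUV).swap.integral_prod_left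

lemma memLp_indicator_one [IsFiniteMeasure P] {A : Set Ω} (hA : MeasurableSet A) (p : ENNReal) :
    MemLp (A.indicator (1 : Ω → ℝ)) p P :=
  (memLp_const 1).indicator hA

lemma memLp_layer_comp [IsFiniteMeasure P] (hU : Measurable U) (x : ℝ) :
    MemLp (fun ω => layer (U ω) x) 2 P := by
  rw [layer_comp_eq_indicator_sub]
  exact (memLp_indicator_one (hU measurableSet_Ioi) 2).sub (memLp_const _)

variable [IsProbabilityMeasure P]

lemma covariance_indicator_one {A B : Set Ω} (hA : MeasurableSet A) (hB : MeasurableSet B) :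
    cov[A.indicator 1, B.indicator 1; P] = P.real (A ∩ B) - P.real A * P.real B := by
  rw [covariance_eq_sub (memLp_indicator_one hA 2) (memLp_indicator_one hB 2),
    ← inter_indicator_one, integral_indicator_one (hA.inter hB), integral_indicator_one hA,
    integral_indicator_one hB]

lemma covariance_indicator_compl_one {A B : Set Ω} (hA : MeasurableSet A) (hB : MeasurableSet B) :
    cov[Aᶜ.indicator 1, Bᶜ.indicator 1; P] = cov[A.indicator 1, B.indicator 1; P] := by
  simp only [indicator_compl]
  exact (covariance_const_sub_left ((memLp_indicator_one hA 1).integrable le_rfl) 1).trans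
    ((congrArg Neg.neg (covariance_const_sub_right
      ((memLp_indicator_one hB 1).integrable le_rfl) 1)).trans (neg_neg _))

lemma covariance_layer (hU : Measurable U) (hV : Measurable V) (x y : ℝ) :
    cov[fun ω => layer (U ω) x, fun ω => layer (V ω) y; P] =
      P.real {ω | U ω ≤ x ∧ V ω ≤ y} - P.real {ω | U ω ≤ x} * P.real {ω | V ω ≤ y} := by
  have hcompl : ∀ (W : Ω → ℝ) (t : ℝ), {ω | t < W ω} = {ω | W ω ≤ t}ᶜ := fun W t => by
    ext; simp
  have hUx : MeasurableSet {ω | U ω ≤ x} := hU measurableSet_Iic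
  have hVy : MeasurableSet {ω | V ω ≤ y} := hV measurableSet_Iic
  rw [layer_comp_eq_indicator_sub, layer_comp_eq_indicator_sub, hcompl, hcompl,
    covariance_sub_const_left ((memLp_indicator_one hUx.compl 1).integrable le_rfl),
    covariance_sub_const_right ((memLp_indicator_one hVy.compl 1).integrable le_rfl),
    covariance_indicator_compl_one hUx hVy, covariance_indicator_one hUx hVy]
  rfl

lemma integral_layer_comp_mul_sub_mul (hUm : Measurable U) (hVm : Measurable V) (p : ℝ × ℝ) :
    ∫ ω, layer (U ω) p.1 * layer (V ω) p.2 ∂P -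
        (∫ ω, layer (U ω) p.1 ∂P) * ∫ ω, layer (V ω) p.2 ∂P =
      P.real {ω | U ω ≤ p.1 ∧ V ω ≤ p.2} - P.real {ω | U ω ≤ p.1} * P.real {ω | V ω ≤ p.2} :=
  (covariance_eq_sub (memLp_layer_comp hUm p.1) (memLp_layer_comp hVm p.2)).symm.trans
    (covariance_layer hUm hVm p.1 p.2)

theorem integrable_measureReal_le_sub_mul (hUm : Measurable U) (hVm : Measurable V)
    (hU : MemLp U 2 P) (hV : MemLp V 2 P) :
    Integrable fun p : ℝ × ℝ =>
      P.real {ω | U ω ≤ p.1 ∧ V ω ≤ p.2} - P.real {ω | U ω ≤ p.1} * P.real {ω | V ω ≤ p.2} := by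
  have hjoint := integrable_integral_layer_comp_mul_layer_comp hUm hVm (hU.integrable_mul hV)
  have hU' := integrable_integral_layer_comp hUm (hU.integrable one_le_two)
  have hV' := integrable_integral_layer_comp hVm (hV.integrable one_le_two)
  rw [Measure.volume_eq_prod] at hjoint ⊢
  exact (hjoint.sub (hU'.mul_prod hV')).congr
    (ae_of_all _ (integral_layer_comp_mul_sub_mul hUm hVm))

theorem covariance_eq_integral_measureReal_le_sub_mul (hUm : Measurable U) (hVm : Measurable V)
    (hU : MemLp U 2 P) (hV : MemLp V 2 P) :
    cov[U, V; P] = ∫ p : ℝ × ℝ,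
      P.real {ω | U ω ≤ p.1 ∧ V ω ≤ p.2} - P.real {ω | U ω ≤ p.1} * P.real {ω | V ω ≤ p.2} := by
  have hjoint := integrable_integral_layer_comp_mul_layer_comp hUm hVm (hU.integrable_mul hV)
  have hU' := integrable_integral_layer_comp hUm (hU.integrable one_le_two)
  have hV' := integrable_integral_layer_comp hVm (hV.integrable one_le_two)
  rw [covariance_eq_sub hU hV]
  simp only [Pi.mul_apply]
  rw [integral_mul_eq_integral_integral_layer hUm hVm (hU.integrable_mul hV),
    integral_eq_integral_integral_layer hUm (hU.integrable one_le_two),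
    integral_eq_integral_integral_layer hVm (hV.integrable one_le_two)]
  rw [Measure.volume_eq_prod] at hjoint ⊢
  rw [← integral_prod_mul, ← integral_sub hjoint (hU'.mul_prod hV')]
  exact integral_congr_ae (ae_of_all _ (integral_layer_comp_mul_sub_mul hUm hVm))

end Hoeffding

section Swap

variable {μ : Measure ℝ} [SFinite μ]

lemma measure_prod_setOf_fst_eq_snd [NullSingletonClass μ] :
    μ.prod μ {p : ℝ × ℝ | p.1 = p.2} = 0 := by
  rw [Measure.prod_apply (measurableSet_eq_fun measurable_fst measurable_snd)]
  simp [preimage]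

lemma compl_setOf_fst_lt_snd_ae_eq [NullSingletonClass μ] :
    ({p : ℝ × ℝ | p.1 < p.2}ᶜ : Set (ℝ × ℝ)) =ᵐ[μ.prod μ] {p : ℝ × ℝ | p.2 < p.1} := by
  have hne : ∀ᵐ p ∂μ.prod μ, p.1 ≠ p.2 := ae_iff.2 (by simpa using measure_prod_setOf_fst_eq_snd)
  refine Filter.eventuallyEq_set.2 (hne.mono fun p hp => ?_)
  change ¬p.1 < p.2 ↔ p.2 < p.1
  exact not_lt.trans ⟨fun h => lt_of_le_of_ne h hp.symm, le_of_lt⟩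

lemma integrableOn_setOf_fst_lt_snd_add_swap {f : ℝ × ℝ → ℝ}
    (hf : Integrable f (μ.prod μ)) :
    IntegrableOn (fun p => f p + f p.swap) {p : ℝ × ℝ | p.1 < p.2} (μ.prod μ) :=
  (hf.add hf.swap).integrableOn

lemma integral_eq_setIntegral_fst_lt_snd_add_swap [NullSingletonClass μ] {f : ℝ × ℝ → ℝ}
    (hf : Integrable f (μ.prod μ)) :
    ∫ p, f p ∂μ.prod μ = ∫ p in {p : ℝ × ℝ | p.1 < p.2}, (f p + f p.swap) ∂μ.prod μ := by
  have hT : MeasurableSet {p : ℝ × ℝ | p.1 < p.2} := measurableSet_lt measurable_fst measurable_snd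
  have hswap : ∫ p in {p : ℝ × ℝ | p.2 < p.1}, f p ∂μ.prod μ =
      ∫ p in {p : ℝ × ℝ | p.1 < p.2}, f p.swap ∂μ.prod μ :=
    (Measure.measurePreserving_swap.setIntegral_preimage_emb
      MeasurableEquiv.prodComm.measurableEmbedding f _).symm
  rw [← integral_add_compl hT hf, setIntegral_congr_set compl_setOf_fst_lt_snd_ae_eq, hswap]
  exact (integral_add hf.integrableOn hf.swap.integrableOn).symm

end Swap

def partialMaxHoeffdingIntegrand (F : ℝ → ℝ) (i j : ℕ) (p : ℝ × ℝ) : ℝ :=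
  F (min p.1 p.2) ^ i * F p.2 ^ (j - i) - F p.1 ^ i * F p.2 ^ j

lemma partialMaxHoeffdingIntegrand_add_swap (F : ℝ → ℝ) {i j : ℕ} (hij : i ≤ j) {p : ℝ × ℝ}
    (hp : p.1 < p.2) :
    partialMaxHoeffdingIntegrand F i j p + partialMaxHoeffdingIntegrand F i j p.swap =
      F p.1 ^ i * (F p.1 ^ (j - i) + F p.2 ^ (j - i)) * (1 - F p.2 ^ i) := by
  have hpow : ∀ t, F t ^ j = F t ^ i * F t ^ (j - i) := fun t => by
    rw [← pow_add, Nat.add_sub_cancel' hij]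
  simp only [partialMaxHoeffdingIntegrand, Prod.fst_swap, Prod.snd_swap, min_eq_left hp.le,
    min_eq_right hp.le, hpow]
  ring

section PartialMaxima

variable {Ω : Type*} {X Y : ℕ → Ω → ℝ}

lemma eq_sup'_of_partialMax (hY1 : Y 1 = X 1)
    (hYs : ∀ k, 1 ≤ k → ∀ ω, Y (k + 1) ω = max (Y k ω) (X (k + 1) ω)) {k : ℕ} (hk : 1 ≤ k) :
    Y k = (Finset.Ioc 0 k).sup' (Finset.nonempty_Ioc.2 hk) X := by
  induction k, hk using Nat.le_induction with
  | base => simp [hY1]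
  | succ k hk ih =>
    ext ω
    rw [hYs k hk ω, ih, Finset.sup'_apply, Finset.sup'_apply, ← Finset.sup'_congr
      (Finset.insert_nonempty _ _) (Finset.insert_Ioc_right_eq_Ioc_add_one (Nat.zero_le k))
      fun _ _ => rfl, Finset.sup'_insert, max_comm]

lemma setOf_partialMax_le (hY1 : Y 1 = X 1)
    (hYs : ∀ k, 1 ≤ k → ∀ ω, Y (k + 1) ω = max (Y k ω) (X (k + 1) ω)) {k : ℕ} (hk : 1 ≤ k)
    (t : ℝ) : {ω | Y k ω ≤ t} = ⋂ m ∈ Finset.Ioc 0 k, X m ⁻¹' Iic t := by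
  ext ω
  simp [eq_sup'_of_partialMax hY1 hYs hk]

lemma setOf_partialMax_le_and_le (hY1 : Y 1 = X 1)
    (hYs : ∀ k, 1 ≤ k → ∀ ω, Y (k + 1) ω = max (Y k ω) (X (k + 1) ω)) {i j : ℕ} (hi : 1 ≤ i)
    (hij : i ≤ j) (x y : ℝ) :
    {ω | Y i ω ≤ x ∧ Y j ω ≤ y} =
      ⋂ m ∈ Finset.Ioc 0 j, X m ⁻¹' Iic (if m ≤ i then min x y else y) := by
  have hYi := setOf_partialMax_le hY1 hYs hi x
  have hYj := setOf_partialMax_le hY1 hYs (hi.trans hij) y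
  simp only [Set.ext_iff, mem_ofPred_eq, mem_iInter, mem_preimage, mem_Iic, Finset.mem_Ioc]
    at hYi hYj ⊢
  intro ω
  rw [hYi, hYj]
  constructor
  · rintro ⟨hx, hy⟩ m ⟨hm0, hmj⟩
    split_ifs with hmi
    · exact le_min (hx m ⟨hm0, hmi⟩) (hy m ⟨hm0, hmj⟩)
    · exact hy m ⟨hm0, hmj⟩
  · intro h
    refine ⟨fun m ⟨hm0, hmi⟩ => ?_, fun m ⟨hm0, hmj⟩ => ?_⟩
    · have := h m ⟨hm0, hmi.trans hij⟩
      rw [if_pos hmi] at this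
      exact this.trans (min_le_left x y)
    · have := h m ⟨hm0, hmj⟩
      split_ifs at this
      exacts [this.trans (min_le_right x y), this]

variable [MeasurableSpace Ω] {P : Measure Ω}

lemma measurable_partialMax (hmeas : ∀ k, Measurable (X k)) (hY1 : Y 1 = X 1)
    (hYs : ∀ k, 1 ≤ k → ∀ ω, Y (k + 1) ω = max (Y k ω) (X (k + 1) ω)) {k : ℕ} (hk : 1 ≤ k) :
    Measurable (Y k) := by
  rw [eq_sup'_of_partialMax hY1 hYs hk]
  exact Finset.measurable_sup' _ fun m _ => hmeas m

lemma memLp_partialMax {p : ENNReal} (hX : ∀ k, MemLp (X k) p P) (hY1 : Y 1 = X 1)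
    (hYs : ∀ k, 1 ≤ k → ∀ ω, Y (k + 1) ω = max (Y k ω) (X (k + 1) ω)) {k : ℕ} (hk : 1 ≤ k) :
    MemLp (Y k) p P := by
  rw [eq_sup'_of_partialMax hY1 hYs hk]
  exact Finset.sup'_induction (p := fun f => MemLp f p P) _ _ (fun _ hf _ hg => hf.sup hg)
    fun m _ => hX m

lemma measureReal_biInter_preimage_Iic {F : ℝ → ℝ}
    (hindep : iIndepFun X P) (hF : ∀ k t, P.real (X k ⁻¹' Iic t) = F t) (S : Finset ℕ)
    (c : ℕ → ℝ) : P.real (⋂ m ∈ S, X m ⁻¹' Iic (c m)) = ∏ m ∈ S, F (c m) := by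
  rw [measureReal_def, hindep.meas_biInter fun m _ => ⟨Iic (c m), measurableSet_Iic, rfl⟩,
    ENNReal.toReal_prod]
  exact Finset.prod_congr rfl fun m _ => hF m (c m)

lemma measureReal_partialMax_le {F : ℝ → ℝ} (hindep : iIndepFun X P)
    (hF : ∀ k t, P.real (X k ⁻¹' Iic t) = F t) (hY1 : Y 1 = X 1)
    (hYs : ∀ k, 1 ≤ k → ∀ ω, Y (k + 1) ω = max (Y k ω) (X (k + 1) ω)) {k : ℕ} (hk : 1 ≤ k)
    (t : ℝ) : P.real {ω | Y k ω ≤ t} = F t ^ k := by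
  rw [setOf_partialMax_le hY1 hYs hk, measureReal_biInter_preimage_Iic hindep hF,
    Finset.prod_const, Nat.card_Ioc, Nat.sub_zero]

lemma measureReal_partialMax_le_and_le {F : ℝ → ℝ} (hindep : iIndepFun X P)
    (hF : ∀ k t, P.real (X k ⁻¹' Iic t) = F t) (hY1 : Y 1 = X 1)
    (hYs : ∀ k, 1 ≤ k → ∀ ω, Y (k + 1) ω = max (Y k ω) (X (k + 1) ω)) {i j : ℕ} (hi : 1 ≤ i)
    (hij : i ≤ j) (x y : ℝ) :
    P.real {ω | Y i ω ≤ x ∧ Y j ω ≤ y} = F (min x y) ^ i * F y ^ (j - i) := by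
  rw [setOf_partialMax_le_and_le hY1 hYs hi hij, measureReal_biInter_preimage_Iic hindep hF,
    ← Finset.prod_Ioc_consecutive _ (Nat.zero_le i) hij,
    Finset.prod_eq_pow_card fun m hm => by rw [if_pos (Finset.mem_Ioc.1 hm).2],
    Finset.prod_eq_pow_card fun m hm => by rw [if_neg (Finset.mem_Ioc.1 hm).1.not_ge],
    Nat.card_Ioc, Nat.card_Ioc, Nat.sub_zero]

lemma measureReal_partialMax_le_and_le_sub_mul {F : ℝ → ℝ} (hindep : iIndepFun X P)
    (hF : ∀ k t, P.real (X k ⁻¹' Iic t) = F t) (hY1 : Y 1 = X 1)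
    (hYs : ∀ k, 1 ≤ k → ∀ ω, Y (k + 1) ω = max (Y k ω) (X (k + 1) ω)) {i j : ℕ} (hi : 1 ≤ i)
    (hij : i ≤ j) :
    (fun p : ℝ × ℝ => P.real {ω | Y i ω ≤ p.1 ∧ Y j ω ≤ p.2} -
        P.real {ω | Y i ω ≤ p.1} * P.real {ω | Y j ω ≤ p.2}) =
      partialMaxHoeffdingIntegrand F i j := by
  ext p
  rw [measureReal_partialMax_le_and_le hindep hF hY1 hYs hi hij,
    measureReal_partialMax_le hindep hF hY1 hYs hi,
    measureReal_partialMax_le hindep hF hY1 hYs (hi.trans hij)]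
  rfl

end PartialMaxima

/-- Covariance formula for partial maxima: for `i ≤ j`,
`Cov[X_{i:i}, X_{j:j}] = ∫∫_{x<y} F^i(x)(F^{j-i}(x)+F^{j-i}(y))(1-F^i(y)) dy dx`,
which is finite and non-negative. -/
theorem partial_maxima_covariance_formula
    {Ω : Type*} [MeasurableSpace Ω] (P : Measure Ω) [IsProbabilityMeasure P]
    (X : ℕ → Ω → ℝ) (hmeas : ∀ k, Measurable (X k))
    (hindep : iIndepFun X P)
    (hid : ∀ k, P.map (X k) = P.map (X 1))
    (hL2 : MemLp (X 1) 2 P)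
    (F : ℝ → ℝ) (hF : ∀ x, F x = (P (X 1 ⁻¹' Set.Iic x)).toReal)
    (Y : ℕ → Ω → ℝ) (hY1 : Y 1 = X 1)
    (hYs : ∀ k, 1 ≤ k → ∀ ω, Y (k + 1) ω = max (Y k ω) (X (k + 1) ω))
    (i j : ℕ) (hi : 1 ≤ i) (hij : i ≤ j) :
    IntegrableOn
      (fun p : ℝ × ℝ => F p.1 ^ i * (F p.1 ^ (j - i) + F p.2 ^ (j - i)) * (1 - F p.2 ^ i))
      {p : ℝ × ℝ | p.1 < p.2} volume ∧
    (∫ ω, (Y i ω - ∫ ω', Y i ω' ∂P) * (Y j ω - ∫ ω', Y j ω' ∂P) ∂P) =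
      ∫ p in {p : ℝ × ℝ | p.1 < p.2},
        F p.1 ^ i * (F p.1 ^ (j - i) + F p.2 ^ (j - i)) * (1 - F p.2 ^ i) ∧
    0 ≤ ∫ ω, (Y i ω - ∫ ω', Y i ω' ∂P) * (Y j ω - ∫ ω', Y j ω' ∂P) ∂P := by
  have hident : ∀ k, IdentDistrib (X k) (X 1) P P :=
    fun k => ⟨(hmeas k).aemeasurable, (hmeas 1).aemeasurable, hid k⟩
  have hFX : ∀ k t, P.real (X k ⁻¹' Iic t) = F t := fun k t => by
    rw [hF, measureReal_def, ← (hident k).measure_mem_eq measurableSet_Iic]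
  have hYm : ∀ {k}, 1 ≤ k → Measurable (Y k) := measurable_partialMax hmeas hY1 hYs
  have hY2 : ∀ {k}, 1 ≤ k → MemLp (Y k) 2 P :=
    memLp_partialMax (fun k => (hident k).memLp_iff.2 hL2) hY1 hYs
  have hj : 1 ≤ j := hi.trans hij
  have hD := measureReal_partialMax_le_and_le_sub_mul hindep hFX hY1 hYs hi hij
  have hDint := integrable_measureReal_le_sub_mul (hYm hi) (hYm hj) (hY2 hi) (hY2 hj)
  have hcov := covariance_eq_integral_measureReal_le_sub_mul (hYm hi) (hYm hj) (hY2 hi) (hY2 hj)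
  rw [hD, Measure.volume_eq_prod] at hDint hcov
  have hsymm := fun p (hp : p ∈ {p : ℝ × ℝ | p.1 < p.2}) =>
    partialMaxHoeffdingIntegrand_add_swap F hij hp
  have hT : MeasurableSet {p : ℝ × ℝ | p.1 < p.2} := measurableSet_lt measurable_fst measurable_snd
  have hF01 : ∀ t, 0 ≤ F t ∧ F t ≤ 1 := fun t => hF t ▸ ⟨measureReal_nonneg, measureReal_le_one⟩
  change _ ∧ cov[Y i, Y j; P] = _ ∧ 0 ≤ cov[Y i, Y j; P]
  rw [hcov, integral_eq_setIntegral_fst_lt_snd_add_swap hDint, setIntegral_congr_fun hT hsymm]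
  refine ⟨(integrableOn_setOf_fst_lt_snd_add_swap hDint).congr_fun hsymm hT, rfl,
    setIntegral_nonneg hT fun p _ => ?_⟩
  obtain ⟨hx0, -⟩ := hF01 p.1
  obtain ⟨hy0, hy1⟩ := hF01 p.2
  exact mul_nonneg (by positivity) (sub_nonneg.2 (pow_le_one₀ hy0 hy1))
end

section
/- For i.i.d. random variables X_1, ..., X_{i+1} with common distribution function F, the pushforward measure dF^{i+1} is absolutely continuous with respect to dF with Radon-Nikodym derivative h_{i+1}(x) = Σ_{j=0}^{i} F^j(x) F^{i-j}(x-), where F(x-) denotes the left limit of F at x. That is, for every Borel set B, ∫_B dF^{i+1}(x) = ∫_B h_{i+1}(x) dF(x). -/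
/-!
Let `M_n` be the maximum of the first `n` variables and `ν_n` its law. Since `M_n` is
independent of `X_{n+1}`, the law of `M_{n+1} = max M_n X_{n+1}` is the image of `ν_n ⊗ μ`
under `max`. Splitting according to which coordinate attains the maximum gives
`ν_{n+1}(B) = ∫_B F dν_n + ∫_B ν_n(-∞, x) dμ(x)`, and `ν_n(-∞, x) = F(x-)^n`. So if
`ν_n = h_n μ`, then `ν_{n+1}` has density `h_n F + F(x-)^n = h_{n+1}` with respect to `μ`.
-/

open MeasureTheory ProbabilityTheory Set
open scoped ENNReal

lemma geom_sum₂_succ_eq_mul_add {R : Type*} [CommSemiring R] (x y : R) (n : ℕ) :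
    ∑ j ∈ Finset.range (n + 2), x ^ j * y ^ (n + 1 - j) =
      (∑ j ∈ Finset.range (n + 1), x ^ j * y ^ (n - j)) * x + y ^ (n + 1) := by
  rw [Finset.sum_range_succ', Finset.sum_mul]
  congr 1
  · refine Finset.sum_congr rfl fun j _ => ?_
    rw [Nat.add_sub_add_right, pow_succ]
    ring
  · simp

section MaxLaw

variable {α : Type*} [LinearOrder α] [MeasurableSpace α]

/-- `maxLaw μ n` is the law of the maximum of `n + 1` independent `μ`-distributed variables. -/
noncomputable def maxLaw (μ : Measure α) : ℕ → Measure α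
  | 0 => μ
  | n + 1 => ((maxLaw μ n).prod μ).map fun p => max p.1 p.2

/-- The paper's `h_{n+1}`, with `F(x) = μ (Iic x)` and `F(x-) = μ (Iio x)`. -/
noncomputable def maxDensity (μ : Measure α) (n : ℕ) (x : α) : ℝ≥0∞ :=
  ∑ j ∈ Finset.range (n + 1), μ (Iic x) ^ j * μ (Iio x) ^ (n - j)

lemma maxDensity_lt_top (μ : Measure α) [IsFiniteMeasure μ] (n : ℕ) (x : α) :
    maxDensity μ n x < ∞ :=
  ENNReal.sum_lt_top.mpr fun _ _ => by finiteness

lemma maxDensity_toReal (μ : Measure α) [IsFiniteMeasure μ] (n : ℕ) (x : α) :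
    (maxDensity μ n x).toReal =
      ∑ j ∈ Finset.range (n + 1), μ.real (Iic x) ^ j * μ.real (Iio x) ^ (n - j) := by
  rw [maxDensity, ENNReal.toReal_sum fun j _ => by finiteness]
  simp only [ENNReal.toReal_mul, ENNReal.toReal_pow, measureReal_def]

variable [TopologicalSpace α] [OrderClosedTopology α] [BorelSpace α]

lemma measurable_measure_Iic (μ : Measure α) : Measurable fun x => μ (Iic x) :=
  Monotone.measurable fun _ _ hxy => measure_mono (Iic_subset_Iic.mpr hxy)

lemma measurable_measure_Iio (μ : Measure α) : Measurable fun x => μ (Iio x) :=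
  Monotone.measurable fun _ _ hxy => measure_mono (Iio_subset_Iio hxy)

lemma measurable_maxDensity (μ : Measure α) (n : ℕ) : Measurable (maxDensity μ n) :=
  Finset.measurable_sum _ fun j _ =>
    ((measurable_measure_Iic μ).pow_const j).mul ((measurable_measure_Iio μ).pow_const (n - j))

variable [SecondCountableTopology α]

lemma measurable_max_prod : Measurable fun p : α × α => max p.1 p.2 :=
  measurable_fst.max measurable_snd

/-- A tie `p.1 = p.2` is attributed to the first coordinate, which is why `Iic` and `Iio`
both appear. -/
lemma map_max_prod_apply (ν μ : Measure α) [SFinite ν] [SFinite μ] {B : Set α}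
    (hB : MeasurableSet B) :
    (ν.prod μ).map (fun p => max p.1 p.2) B =
      ∫⁻ y in B, μ (Iic y) ∂ν + ∫⁻ x in B, ν (Iio x) ∂μ := by
  set A₁ : Set (α × α) := {p | p.1 ∈ B ∧ p.2 ≤ p.1}
  set A₂ : Set (α × α) := {p | p.2 ∈ B ∧ p.1 < p.2}
  have hA₁ : MeasurableSet A₁ :=
    (hB.preimage measurable_fst).inter (measurableSet_le measurable_snd measurable_fst)
  have hA₂ : MeasurableSet A₂ :=
    (hB.preimage measurable_snd).inter (measurableSet_lt measurable_fst measurable_snd)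
  have hpre : (fun p : α × α => max p.1 p.2) ⁻¹' B = A₁ ∪ A₂ := by
    ext ⟨y, x⟩
    rcases le_or_gt x y with hxy | hxy
    · simp [A₁, A₂, hxy, not_lt.mpr hxy]
    · simp [A₁, A₂, max_eq_right hxy.le, hxy, not_le.mpr hxy]
  have hdisj : Disjoint A₁ A₂ :=
    disjoint_left.mpr fun _ h₁ h₂ => not_lt.mpr h₁.2 h₂.2
  have hsec₁ : ∀ y, μ (Prod.mk y ⁻¹' A₁) = B.indicator (fun y => μ (Iic y)) y := by
    intro y
    by_cases hy : y ∈ B <;> simp [A₁, hy, Iic_def]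
  have hsec₂ : ∀ x, ν ((fun y => (y, x)) ⁻¹' A₂) = B.indicator (fun x => ν (Iio x)) x := by
    intro x
    by_cases hx : x ∈ B <;> simp [A₂, hx, Iio_def]
  rw [Measure.map_apply measurable_max_prod hB, hpre, measure_union hdisj hA₂,
    Measure.prod_apply hA₁, Measure.prod_apply_symm hA₂]
  simp only [hsec₁, hsec₂, lintegral_indicator hB]

lemma map_max_prod_apply_Iio (ν μ : Measure α) [SFinite ν] [SFinite μ] (x : α) :
    (ν.prod μ).map (fun p => max p.1 p.2) (Iio x) = ν (Iio x) * μ (Iio x) := by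
  rw [Measure.map_apply measurable_max_prod measurableSet_Iio, ← Measure.prod_prod]
  congr 1
  ext p
  simp

variable (μ : Measure α) [SFinite μ]

instance (n : ℕ) : SFinite (maxLaw μ n) := by
  induction n with
  | zero => exact ‹_›
  | succ n _ => rw [maxLaw]; infer_instance

lemma maxLaw_Iio (n : ℕ) (x : α) : maxLaw μ n (Iio x) = μ (Iio x) ^ (n + 1) := by
  induction n with
  | zero => simp [maxLaw]
  | succ n ih => rw [maxLaw, map_max_prod_apply_Iio, ih, ← pow_succ]

lemma maxLaw_eq_withDensity (n : ℕ) : maxLaw μ n = μ.withDensity (maxDensity μ n) := by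
  induction n with
  | zero => rw [maxLaw, show maxDensity μ 0 = 1 from funext fun x => by simp [maxDensity],
      withDensity_one]
  | succ n ih =>
    ext B hB
    rw [maxLaw, map_max_prod_apply _ _ hB, withDensity_apply _ hB]
    simp only [maxLaw_Iio]
    rw [ih, setLIntegral_withDensity_eq_setLIntegral_mul _ (measurable_maxDensity μ n)
      (measurable_measure_Iic μ) hB, ← lintegral_add_left]
    · simp only [maxDensity, Pi.mul_apply, geom_sum₂_succ_eq_mul_add]
    · exact (measurable_maxDensity μ n).mul (measurable_measure_Iic μ)

end MaxLaw

section Independence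

variable {Ω α : Type*} [LinearOrder α] [TopologicalSpace α] [OrderClosedTopology α]
  [mα : MeasurableSpace α] [BorelSpace α] [SecondCountableTopology α]

lemma measurable_iSup_comap_of_max {X Y : ℕ → Ω → α} (hY1 : Y 1 = X 1)
    (hYs : ∀ k, 1 ≤ k → ∀ ω, Y (k + 1) ω = max (Y k ω) (X (k + 1) ω)) (n : ℕ) :
    Measurable[⨆ j ∈ Iic (n + 1), mα.comap (X j)] (Y (n + 1)) := by
  have hX : ∀ n, Measurable[⨆ j ∈ Iic n, mα.comap (X j)] (X n) := fun n =>
    Measurable.of_comap_le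
      (le_iSup₂ (f := fun j (_ : j ∈ Iic n) => mα.comap (X j)) n (mem_Iic.mpr le_rfl))
  induction n with
  | zero => rw [hY1]; exact hX 1
  | succ n ih =>
    have hmono : (⨆ j ∈ Iic (n + 1), mα.comap (X j)) ≤ ⨆ j ∈ Iic (n + 2), mα.comap (X j) :=
      biSup_mono fun _ => (Iic_subset_Iic.mpr (by omega) ·)
    rw [show Y (n + 2) = fun ω => max (Y (n + 1) ω) (X (n + 2) ω) from funext (hYs _ (by omega))]
    exact (ih.mono hmono le_rfl).max (hX (n + 2))

variable [MeasurableSpace Ω] {P : Measure Ω}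

lemma indepFun_of_measurable_iSup_comap {ι β γ : Type*} [mβ : MeasurableSpace β]
    [MeasurableSpace γ] {X : ι → Ω → β} (hX : ∀ j, Measurable (X j)) (hindep : iIndepFun X P)
    {S : Set ι} {k : ι} (hk : k ∉ S) {Z : Ω → γ}
    (hZ : Measurable[⨆ j ∈ S, mβ.comap (X j)] Z) :
    IndepFun Z (X k) P := by
  have hST : Indep (⨆ j ∈ S, mβ.comap (X j)) (⨆ j ∈ ({k} : Set ι), mβ.comap (X j)) P :=
    indep_iSup_of_disjoint (fun j => (hX j).comap_le) hindep (disjoint_singleton_right.mpr hk)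
  rw [IndepFun_iff_Indep]
  exact indep_of_indep_of_le_right (indep_of_indep_of_le_left hST hZ.comap_le)
    (le_iSup₂ (f := fun j (_ : j ∈ ({k} : Set ι)) => mβ.comap (X j)) k (mem_singleton k))

lemma IndepFun.map_max [IsFiniteMeasure P] {f g : Ω → α} (hfg : IndepFun f g P)
    (hf : AEMeasurable f P) (hg : AEMeasurable g P) :
    P.map (fun ω => max (f ω) (g ω)) = ((P.map f).prod (P.map g)).map fun p => max p.1 p.2 := by
  rw [← hfg.map_prod_eq_prod_map_map hf hg,
    AEMeasurable.map_map_of_aemeasurable measurable_max_prod.aemeasurable (hf.prodMk hg)]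
  rfl

lemma map_eq_maxLaw [IsFiniteMeasure P] {X Y : ℕ → Ω → α} (hmeas : ∀ k, Measurable (X k))
    (hindep : iIndepFun X P) (hid : ∀ k, P.map (X k) = P.map (X 1)) (hY1 : Y 1 = X 1)
    (hYs : ∀ k, 1 ≤ k → ∀ ω, Y (k + 1) ω = max (Y k ω) (X (k + 1) ω)) (n : ℕ) :
    P.map (Y (n + 1)) = maxLaw (P.map (X 1)) n := by
  induction n with
  | zero => rw [hY1, maxLaw]
  | succ n ih =>
    have hYn := measurable_iSup_comap_of_max hY1 hYs n
    have hind : IndepFun (Y (n + 1)) (X (n + 2)) P :=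
      indepFun_of_measurable_iSup_comap hmeas hindep (by simp) hYn
    have hY : Measurable (Y (n + 1)) :=
      hYn.mono (iSup₂_le fun j _ => (hmeas j).comap_le) le_rfl
    rw [show Y (n + 2) = fun ω => max (Y (n + 1) ω) (X (n + 2) ω) from funext (hYs _ (by omega)),
      IndepFun.map_max hind hY.aemeasurable (hmeas _).aemeasurable, ih, hid (n + 2), maxLaw]

end Independence

/-- The law of `max{X_1,...,X_{i+1}}` is absolutely continuous w.r.t. the common law of the
`X_k`, with Radon–Nikodym derivative `h_{i+1}(x) = Σ_{j=0}^{i} F(x)^j F(x-)^{i-j}`. -/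
theorem law_of_max_radon_nikodym
    {Ω : Type*} [MeasurableSpace Ω] (P : Measure Ω) [IsProbabilityMeasure P]
    (X : ℕ → Ω → ℝ) (hmeas : ∀ k, Measurable (X k))
    (hindep : iIndepFun X P)
    (hid : ∀ k, P.map (X k) = P.map (X 1))
    (F : ℝ → ℝ) (hF : ∀ x, F x = (P (X 1 ⁻¹' Set.Iic x)).toReal)
    (Fm : ℝ → ℝ) (hFm : ∀ x, Fm x = (P (X 1 ⁻¹' Set.Iio x)).toReal)
    (Y : ℕ → Ω → ℝ) (hY1 : Y 1 = X 1)
    (hYs : ∀ k, 1 ≤ k → ∀ ω, Y (k + 1) ω = max (Y k ω) (X (k + 1) ω))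
    (i : ℕ) :
    ∀ B : Set ℝ, MeasurableSet B →
      (P.map (Y (i + 1))) B =
        ENNReal.ofReal
          (∫ x in B, (∑ j ∈ Finset.range (i + 1), F x ^ j * Fm x ^ (i - j))
            ∂(P.map (X 1))) := by
  intro B hB
  set μ := P.map (X 1)
  have hdensity : ∀ x, ∑ j ∈ Finset.range (i + 1), F x ^ j * Fm x ^ (i - j) =
      (maxDensity μ i x).toReal := fun x => by
    rw [maxDensity_toReal, hF, hFm, map_measureReal_apply (hmeas 1) measurableSet_Iic,
      map_measureReal_apply (hmeas 1) measurableSet_Iio, measureReal_def, measureReal_def]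
  have hlaw : P.map (Y (i + 1)) = μ.withDensity (maxDensity μ i) := by
    rw [map_eq_maxLaw hmeas hindep hid hY1 hYs, maxLaw_eq_withDensity]
  simp only [hdensity]
  rw [integral_toReal (measurable_maxDensity μ i).aemeasurable
      (ae_of_all _ fun x => maxDensity_lt_top μ i x), ← withDensity_apply _ hB, ← hlaw,
    ENNReal.ofReal_toReal (measure_ne_top _ _)]
end

section
/- The distribution function F(x) = 0 for x ≤ 0, F(x) = x/4 for 0 ≤ x < 1, F(x) = 1 for x ≥ 1 (which is log-concave on (0,1) but has an atom at its right end-point x = 1) has partial maxima spacings with Cov[Z_1, Z_2] = 59/184320 > 0. -/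
open MeasureTheory ProbabilityTheory Set

open scoped ENNReal

/-!
The law of each `Xₖ` is `ν = ¼ · Lebesgue|(0,1) + ¾ · δ₁`, and for `m ∈ [0,1]` one has
`E[max(m, X) - m] = (1 - m)(7 - m)/8`. Integrating out `X₃` first turns `E[Z₂]` and `E[Z₁Z₂]`
into integrals of `(1 - M)(7 - M)/8` and `(M - X₁)(1 - M)(7 - M)/8` with `M = max(X₁, X₂)`, and
`∫ φ(max(x, y)) dν(y) = (x φ(x) + ∫ₓ¹ φ)/4 + ¾ φ(1)` reduces everything to polynomial integrals:
`E[Z₁] = 5/48`, `E[Z₂] = 13/768`, `E[Z₁Z₂] = 1/480`, and `1/480 - (5/48)(13/768) = 59/184320`.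
-/

theorem Continuous.memLp_of_restrict_eq {α E : Type*} [MeasurableSpace α] [TopologicalSpace α]
    [OpensMeasurableSpace α] [T2Space α] [NormedAddCommGroup E] [SecondCountableTopologyEither α E]
    {μ : Measure α} [IsFiniteMeasure μ] {K : Set α} (hK : IsCompact K) (hμ : μ.restrict K = μ)
    {f : α → E} (hf : Continuous f) (p : ℝ≥0∞) : MemLp f p μ := by
  obtain ⟨C, hC⟩ := hK.exists_bound_of_continuousOn hf.continuousOn
  rw [← hμ]
  exact MemLp.of_bound hf.aestronglyMeasurable C ((ae_restrict_mem hK.measurableSet).mono hC)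

theorem integral_prod_prod {α β γ E : Type*} [MeasurableSpace α] [MeasurableSpace β]
    [MeasurableSpace γ] [NormedAddCommGroup E] [NormedSpace ℝ E] {μ : Measure α} {ν : Measure β}
    {ρ : Measure γ} [SFinite μ] [SFinite ν] [SFinite ρ] {F : α × β × γ → E}
    (hF : Integrable F (μ.prod (ν.prod ρ))) :
    ∫ p, F p ∂μ.prod (ν.prod ρ) = ∫ x, ∫ y, ∫ z, F (x, y, z) ∂ρ ∂ν ∂μ := by
  rw [integral_prod F hF]
  exact integral_congr_ae (hF.prod_right_ae.mono fun x hx => integral_prod _ hx)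

theorem ProbabilityTheory.iIndepFun.map_prodMk_prodMk {Ω ι : Type*} [MeasurableSpace Ω]
    {P : Measure Ω} [IsFiniteMeasure P] {β : ι → Type*} [∀ i, MeasurableSpace (β i)]
    {X : ∀ i, Ω → β i} (hindep : iIndepFun X P) (hX : ∀ i, Measurable (X i)) {i j k : ι}
    (hij : i ≠ j) (hik : i ≠ k) (hjk : j ≠ k) :
    P.map (fun ω => (X i ω, X j ω, X k ω)) =
      (P.map (X i)).prod ((P.map (X j)).prod (P.map (X k))) := by
  have hjk_indep : IndepFun (X j) (X k) P := hindep.indepFun hjk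
  have hi_indep : IndepFun (X i) (fun ω => (X j ω, X k ω)) P :=
    (hindep.indepFun_prodMk hX j k i hij.symm hik.symm).symm
  rw [(indepFun_iff_map_prod_eq_prod_map_map (hX i).aemeasurable
      ((hX j).prodMk (hX k)).aemeasurable).mp hi_indep,
    (indepFun_iff_map_prod_eq_prod_map_map (hX j).aemeasurable (hX k).aemeasurable).mp hjk_indep]

noncomputable def uniformWithAtom : Measure ℝ :=
  (4⁻¹ : ℝ≥0∞) • volume.restrict (Ioo 0 1) + (3 / 4 : ℝ≥0∞) • Measure.dirac 1

local notation "ν" => uniformWithAtom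

local notation "ν³" => uniformWithAtom.prod (uniformWithAtom.prod uniformWithAtom)

theorem ENNReal.inv_four_add_three_div_four : (4⁻¹ : ℝ≥0∞) + 3 / 4 = 1 := by
  rw [← one_div, ENNReal.div_add_div_same, show (1 : ℝ≥0∞) + 3 = 4 by norm_num,
    ENNReal.div_self (by norm_num) (by norm_num)]

instance : IsProbabilityMeasure ν :=
  ⟨by simp [uniformWithAtom, Real.volume_Ioo, ENNReal.inv_four_add_three_div_four]⟩

theorem uniformWithAtom_Iic (x : ℝ) :
    ν (Iic x) = ENNReal.ofReal (if x < 0 then 0 else if x < 1 then x / 4 else 1) := by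
  simp only [uniformWithAtom, Measure.add_apply, Measure.smul_apply, smul_eq_mul,
    Measure.restrict_apply measurableSet_Iic, Measure.dirac_apply' _ measurableSet_Iic]
  rcases lt_or_ge x 0 with hx0 | hx0
  · have : Iic x ∩ Ioo 0 1 = ∅ := eq_empty_of_forall_notMem fun y hy => by
      simp only [mem_inter_iff, mem_Iic, mem_Ioo] at hy
      linarith
    simp [hx0, this, show ¬ (1 : ℝ) ≤ x by linarith]
  rcases lt_or_ge x 1 with hx1 | hx1
  · have : Iic x ∩ Ioo 0 1 = Ioc 0 x := by
      ext y
      simp only [mem_inter_iff, mem_Iic, mem_Ioo, mem_Ioc]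
      exact ⟨fun h => ⟨h.2.1, h.1⟩, fun h => ⟨h.2, h.1, h.2.trans_lt hx1⟩⟩
    simp only [this, Real.volume_Ioc, sub_zero, hx0.not_gt, hx1, if_false, if_true,
      indicator_of_notMem (show (1 : ℝ) ∉ Iic x from fun h => hx1.not_ge h), mul_zero, add_zero,
      ENNReal.ofReal_div_of_pos (show (0 : ℝ) < 4 by norm_num), ENNReal.div_eq_inv_mul]
    simp
  · have : Iic x ∩ Ioo 0 1 = Ioo 0 1 := inter_eq_right.mpr fun y hy => hy.2.le.trans hx1
    simp [hx0.not_gt, hx1.not_gt, this, hx1, ENNReal.inv_four_add_three_div_four]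

theorem restrict_Icc_uniformWithAtom : Measure.restrict ν (Icc 0 1) = ν := by
  rw [uniformWithAtom, Measure.restrict_add, Measure.restrict_smul, Measure.restrict_smul,
    Measure.restrict_restrict measurableSet_Icc,
    inter_eq_self_of_subset_right Ioo_subset_Icc_self,
    Measure.restrict_eq_self_of_ae_mem (s := Icc 0 1) (by simp)]

theorem ae_mem_Icc_uniformWithAtom : ∀ᵐ x ∂ν, x ∈ Icc (0 : ℝ) 1 := by
  rw [← restrict_Icc_uniformWithAtom]
  exact ae_restrict_mem measurableSet_Icc

theorem integral_uniformWithAtom {f : ℝ → ℝ} (hf : Continuous f) :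
    ∫ x, f x ∂ν = (∫ x in (0 : ℝ)..1, f x) / 4 + 3 / 4 * f 1 := by
  have hi : Integrable f ν := memLp_one_iff_integrable.mp
    (hf.memLp_of_restrict_eq (isCompact_Icc (a := 0) (b := 1)) restrict_Icc_uniformWithAtom 1)
  rw [uniformWithAtom] at hi ⊢
  rw [integral_add_measure (integrable_add_measure.mp hi).1 (integrable_add_measure.mp hi).2,
    integral_smul_measure, integral_smul_measure, integral_dirac,
    intervalIntegral.integral_of_le zero_le_one, integral_Ioc_eq_integral_Ioo]
  simp only [ENNReal.toReal_inv, ENNReal.toReal_div, ENNReal.toReal_ofNat, smul_eq_mul]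
  ring

theorem integral_comp_max_uniformWithAtom {φ : ℝ → ℝ} (hφ : Continuous φ) {x : ℝ}
    (hx : x ∈ Icc (0 : ℝ) 1) :
    ∫ y, φ (max x y) ∂ν = (x * φ x + ∫ w in x..1, φ w) / 4 + 3 / 4 * φ 1 := by
  have hc : Continuous fun y => φ (max x y) := by fun_prop
  rw [integral_uniformWithAtom hc, max_eq_right hx.2,
    ← intervalIntegral.integral_add_adjacent_intervals (hc.intervalIntegrable 0 x)
      (hc.intervalIntegrable x 1)]
  have below : ∫ y in (0 : ℝ)..x, φ (max x y) = x * φ x := by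
    rw [intervalIntegral.integral_congr (g := fun _ => φ x) fun y hy => by
      rw [uIcc_of_le hx.1] at hy
      simp only [max_eq_left hy.2]]
    simp
  have above : ∫ y in x..(1 : ℝ), φ (max x y) = ∫ w in x..1, φ w :=
    intervalIntegral.integral_congr fun y hy => by
      rw [uIcc_of_le hx.2] at hy
      simp only [max_eq_right hy.1]
  rw [below, above]

theorem integral_max_sub_uniformWithAtom {m : ℝ} (hm : m ∈ Icc (0 : ℝ) 1) :
    ∫ z, (max m z - m) ∂ν = (1 - m) * (7 - m) / 8 := by
  rw [integral_comp_max_uniformWithAtom (φ := fun w => w - m) (by fun_prop) hm, sub_self,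
    mul_zero, zero_add, intervalIntegral.integral_comp_sub_right (fun w => w), integral_id]
  ring

theorem Continuous.memLp_uniformWithAtom_cube {f : ℝ × ℝ × ℝ → ℝ} (hf : Continuous f)
    (p : ℝ≥0∞) : MemLp f p ν³ :=
  hf.memLp_of_restrict_eq (isCompact_Icc.prod (isCompact_Icc.prod isCompact_Icc))
    (by rw [← Measure.prod_restrict, ← Measure.prod_restrict, restrict_Icc_uniformWithAtom]) p

theorem integral_uniformWithAtom_cube {f : ℝ × ℝ × ℝ → ℝ} (hf : Continuous f) :
    ∫ p, f p ∂ν³ = ∫ x, ∫ y, ∫ z, f (x, y, z) ∂ν ∂ν ∂ν :=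
  integral_prod_prod (memLp_one_iff_integrable.mp (hf.memLp_uniformWithAtom_cube 1))

def maxSpacing₁ (p : ℝ × ℝ × ℝ) : ℝ := max p.1 p.2.1 - p.1

def maxSpacing₂ (p : ℝ × ℝ × ℝ) : ℝ := max (max p.1 p.2.1) p.2.2 - max p.1 p.2.1

theorem continuous_maxSpacing₁ : Continuous maxSpacing₁ := by unfold maxSpacing₁; fun_prop

theorem continuous_maxSpacing₂ : Continuous maxSpacing₂ := by unfold maxSpacing₂; fun_prop

theorem max_mem_Icc {α : Type*} [LinearOrder α] {a b x y : α} (hx : x ∈ Icc a b)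
    (hy : y ∈ Icc a b) : max x y ∈ Icc a b :=
  ⟨le_max_of_le_left hx.1, max_le hx.2 hy.2⟩

theorem integral_maxSpacing₁ : ∫ p, maxSpacing₁ p ∂ν³ = 5 / 48 := by
  rw [integral_uniformWithAtom_cube continuous_maxSpacing₁]
  calc ∫ x, ∫ y, ∫ z, maxSpacing₁ (x, y, z) ∂ν ∂ν ∂ν = ∫ x, (1 - x) * (7 - x) / 8 ∂ν :=
        integral_congr_ae <| ae_mem_Icc_uniformWithAtom.mono fun x hx => by
          simp [maxSpacing₁, integral_max_sub_uniformWithAtom hx]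
    _ = 5 / 48 := by
      rw [integral_uniformWithAtom (by fun_prop), intervalIntegral.integral_deriv_eq_sub'
        (fun w => -(1 - w) * (10 - 11 * w + w ^ 2) / 24)
        (by ext w; simp (disch := fun_prop); ring) (fun _ _ => by fun_prop) (by fun_prop)]
      norm_num

theorem integral_maxSpacing₂ : ∫ p, maxSpacing₂ p ∂ν³ = 13 / 768 := by
  rw [integral_uniformWithAtom_cube continuous_maxSpacing₂]
  calc ∫ x, ∫ y, ∫ z, maxSpacing₂ (x, y, z) ∂ν ∂ν ∂ν
        = ∫ x, ∫ y, (1 - max x y) * (7 - max x y) / 8 ∂ν ∂ν :=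
        integral_congr_ae <| ae_mem_Icc_uniformWithAtom.mono fun x hx =>
          integral_congr_ae <| ae_mem_Icc_uniformWithAtom.mono fun y hy =>
            integral_max_sub_uniformWithAtom (max_mem_Icc hx hy)
    _ = ∫ x, (1 - x) * (5 + 5 * x - x ^ 2) / 48 ∂ν :=
        integral_congr_ae <| ae_mem_Icc_uniformWithAtom.mono fun x hx => by
          dsimp only
          rw [integral_comp_max_uniformWithAtom (φ := fun w => (1 - w) * (7 - w) / 8)
            (by fun_prop) hx, intervalIntegral.integral_deriv_eq_sub'
            (fun w => -(1 - w) * (10 - 11 * w + w ^ 2) / 24)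
            (by ext w; simp (disch := fun_prop); ring) (fun _ _ => by fun_prop) (by fun_prop)]
          ring
    _ = 13 / 768 := by
      rw [integral_uniformWithAtom (by fun_prop), intervalIntegral.integral_deriv_eq_sub'
        (fun x => (5 * x - 2 * x ^ 3 + x ^ 4 / 4) / 48)
        (by ext w; simp (disch := fun_prop); ring) (fun _ _ => by fun_prop) (by fun_prop)]
      norm_num

theorem integral_maxSpacing₁_mul_maxSpacing₂ :
    ∫ p, maxSpacing₁ p * maxSpacing₂ p ∂ν³ = 1 / 480 := by
  rw [integral_uniformWithAtom_cube (f := fun p => maxSpacing₁ p * maxSpacing₂ p)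
    (continuous_maxSpacing₁.mul continuous_maxSpacing₂)]
  calc ∫ x, ∫ y, ∫ z, maxSpacing₁ (x, y, z) * maxSpacing₂ (x, y, z) ∂ν ∂ν ∂ν
        = ∫ x, ∫ y, (max x y - x) * ((1 - max x y) * (7 - max x y) / 8) ∂ν ∂ν :=
        integral_congr_ae <| ae_mem_Icc_uniformWithAtom.mono fun x hx =>
          integral_congr_ae <| ae_mem_Icc_uniformWithAtom.mono fun y hy => by
            simp only [maxSpacing₁, maxSpacing₂]
            rw [integral_const_mul, integral_max_sub_uniformWithAtom (max_mem_Icc hx hy)]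
    _ = ∫ x, (1 - x) ^ 3 * (13 - x) / 384 ∂ν :=
        integral_congr_ae <| ae_mem_Icc_uniformWithAtom.mono fun x hx => by
          dsimp only
          rw [integral_comp_max_uniformWithAtom (φ := fun w => (w - x) * ((1 - w) * (7 - w) / 8))
            (by fun_prop) hx, intervalIntegral.integral_deriv_eq_sub'
            (fun w => (1 - w) ^ 3 * (9 - w) / 32 - (1 - x) * (1 - w) ^ 2 * (10 - w) / 24)
            (by ext w; simp (disch := fun_prop); ring) (fun _ _ => by fun_prop) (by fun_prop)]
          ring
    _ = 1 / 480 := by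
      rw [integral_uniformWithAtom (by fun_prop), intervalIntegral.integral_deriv_eq_sub'
        (fun x => -(1 - x) ^ 4 * (16 - x) / 1920)
        (by ext w; simp (disch := fun_prop); ring) (fun _ _ => by fun_prop) (by fun_prop)]
      norm_num

theorem map_eq_uniformWithAtom {Ω : Type*} [MeasurableSpace Ω] {P : Measure Ω}
    [IsFiniteMeasure P] {X : Ω → ℝ} (hX : Measurable X)
    (hF : ∀ x : ℝ, (P (X ⁻¹' Iic x)).toReal = if x < 0 then 0 else if x < 1 then x / 4 else 1) :
    P.map X = ν :=
  Measure.ext_of_Iic _ _ fun x => by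
    rw [Measure.map_apply hX measurableSet_Iic, uniformWithAtom_Iic, ← hF x,
      ENNReal.ofReal_toReal (measure_ne_top P _)]

/-- For the distribution function `F(x) = 0 (x ≤ 0), x/4 (0 ≤ x < 1), 1 (x ≥ 1)` (log-concave
on `(0,1)` but with an atom at its right end-point), the partial maxima spacings satisfy
`Cov[Z₁, Z₂] = 59/184320 > 0`. -/
theorem counterexample_atom_positive_covariance
    {Ω : Type*} [MeasurableSpace Ω] (P : Measure Ω) [IsProbabilityMeasure P]
    (X : ℕ → Ω → ℝ) (hmeas : ∀ k, Measurable (X k))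
    (hindep : iIndepFun X P)
    (hid : ∀ k, P.map (X k) = P.map (X 1))
    (hF : ∀ x : ℝ, (P (X 1 ⁻¹' Set.Iic x)).toReal =
      if x < 0 then 0 else if x < 1 then x / 4 else 1)
    (Y : ℕ → Ω → ℝ) (hY1 : Y 1 = X 1)
    (hYs : ∀ k, 1 ≤ k → ∀ ω, Y (k + 1) ω = max (Y k ω) (X (k + 1) ω))
    (Z : ℕ → Ω → ℝ) (hZ : ∀ k, 1 ≤ k → ∀ ω, Z k ω = Y (k + 1) ω - Y k ω) :
    (∫ ω, (Z 1 ω - ∫ ω', Z 1 ω' ∂P) * (Z 2 ω - ∫ ω', Z 2 ω' ∂P) ∂P) = 59 / 184320 := by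
  set T : Ω → ℝ × ℝ × ℝ := fun ω => (X 1 ω, X 2 ω, X 3 ω)
  have hT : Measurable T := (hmeas 1).prodMk ((hmeas 2).prodMk (hmeas 3))
  have hlaw : ∀ k, P.map (X k) = ν := fun k =>
    (hid k).trans (map_eq_uniformWithAtom (hmeas 1) hF)
  have hTlaw : P.map T = ν³ := by
    rw [hindep.map_prodMk_prodMk hmeas (by norm_num) (by norm_num) (by norm_num), hlaw, hlaw, hlaw]
  have hY2 : ∀ ω, Y 2 ω = max (X 1 ω) (X 2 ω) := fun ω => by rw [hYs 1 le_rfl, hY1]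
  have hZ1 : Z 1 = maxSpacing₁ ∘ T := funext fun ω => by
    rw [hZ 1 le_rfl, hY2, hY1]; rfl
  have hZ2 : Z 2 = maxSpacing₂ ∘ T := funext fun ω => by
    rw [hZ 2 (by norm_num), hYs 2 (by norm_num), hY2]; rfl
  change cov[Z 1, Z 2; P] = _
  rw [hZ1, hZ2, ← covariance_map continuous_maxSpacing₁.aestronglyMeasurable
      continuous_maxSpacing₂.aestronglyMeasurable hT.aemeasurable, hTlaw,
    covariance_eq_sub (continuous_maxSpacing₁.memLp_uniformWithAtom_cube 2)
      (continuous_maxSpacing₂.memLp_uniformWithAtom_cube 2)]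
  simp only [Pi.mul_apply, integral_maxSpacing₁_mul_maxSpacing₂, integral_maxSpacing₁,
    integral_maxSpacing₂]
  norm_num
end

section
/- For any t with 0 ≤ t < 1 and any a > 0, there exist positive constants C_1, C_2 and an integer k_0 such that for all k ≥ k_0: C_1 < k^{1+t} (log k)^a ∫_0^1 u^k (1-u)^t / (-log(1-u))^a du < C_2. -/
open MeasureTheory Filter Topology

/-!
The mass of `u ^ k` sits within `O(1/k)` of `1`, where `(1 - u) ^ t ≍ k ^ (-t)` and
`-log (1 - u) ≍ log k`. For the lower bound integrate over `(1 - 2/k, 1 - 1/k)`, where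
`u ^ k ≥ exp (-4)`. For the upper bound dominate the integrand, splitting at `1 - δ` with
`δ = k ^ (-1/2)`: below, it is at most `u ^ (k - a) ≤ 2 ^ a exp (-√k)`, which is negligible;
above, `-log (1 - u) ≥ (log k) / 2` and `u ^ k ≤ exp (-k (1 - u))`, so that part contributes
at most `2 ^ a (log k) ^ (-a) ∫₀^∞ s ^ t exp (-k s) ds`, which is
`2 ^ a Γ(t + 1) k ^ (-1-t) (log k) ^ (-a)`.
-/

noncomputable def betaLogKernel (t a : ℝ) (k : ℕ) (u : ℝ) : ℝ :=
  u ^ k * (1 - u) ^ t / (-Real.log (1 - u)) ^ a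

section

open Real Set

lemma le_neg_log_one_sub {u : ℝ} (hu : u < 1) : u ≤ -log (1 - u) := by
  linarith [log_le_sub_one_of_pos (sub_pos.2 hu)]

lemma pow_le_exp_neg_mul_one_sub {u : ℝ} (hu : 0 ≤ u) (n : ℕ) :
    u ^ n ≤ exp (-(n * (1 - u))) := by
  calc u ^ n ≤ exp (u - 1) ^ n := pow_le_pow_left₀ hu (by linarith [add_one_le_exp (u - 1)]) n
    _ = exp (-(n * (1 - u))) := by rw [← exp_nat_mul]; ring_nf

lemma exp_neg_two_mul_one_sub_le_pow {u : ℝ} (hu : 1 / 2 ≤ u) (hu1 : u ≤ 1) (n : ℕ) :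
    exp (-(2 * n * (1 - u))) ≤ u ^ n := by
  have hu0 : 0 < u := by linarith
  have hlog : -(2 * (1 - u)) ≤ log u := by
    refine le_trans ?_ (one_sub_inv_le_log_of_pos hu0)
    rw [neg_le_sub_iff_le_add, inv_le_iff_one_le_mul₀ hu0]
    nlinarith
  calc exp (-(2 * n * (1 - u))) ≤ exp (n * log u) :=
        exp_le_exp.2 (by nlinarith [(Nat.cast_nonneg n : (0 : ℝ) ≤ n)])
    _ = u ^ n := by rw [exp_nat_mul, exp_log hu0]

lemma tendsto_rpow_mul_log_rpow_mul_exp_neg_sqrt (s : ℝ) {a : ℝ} (ha : 0 ≤ a) :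
    Tendsto (fun x : ℝ => x ^ s * log x ^ a * exp (-√x)) atTop (𝓝 0) := by
  have hsqrt : Tendsto (fun x : ℝ => x ^ (s + a) * exp (-√x)) atTop (𝓝 0) := by
    refine ((tendsto_rpow_mul_exp_neg_mul_atTop_nhds_zero (2 * (s + a)) 1 one_pos).comp
      tendsto_sqrt_atTop).congr' ?_
    filter_upwards [eventually_ge_atTop 0] with x hx
    rw [Function.comp_apply, rpow_mul (sqrt_nonneg x), rpow_two, sq_sqrt hx, neg_one_mul]
  refine tendsto_of_tendsto_of_tendsto_of_le_of_le' tendsto_const_nhds hsqrt ?_ ?_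
  · filter_upwards [eventually_ge_atTop 1] with x hx
    have := log_nonneg hx
    positivity
  · filter_upwards [eventually_ge_atTop 1] with x hx
    have hx0 : 0 < x := by linarith
    have hlog : log x ^ a ≤ x ^ a :=
      rpow_le_rpow (log_nonneg hx) ((log_le_sub_one_of_pos hx0).trans (by linarith)) ha
    rw [rpow_add hx0, mul_assoc, mul_assoc]
    gcongr

lemma integrableOn_rpow_mul_exp_neg_mul {s r : ℝ} (hs : -1 < s) (hr : 0 < r) :
    IntegrableOn (fun x : ℝ => x ^ s * exp (-(r * x))) (Ioi 0) := by
  refine (integrableOn_rpow_mul_exp_neg_mul_rpow hs one_pos hr).congr_fun (fun x _ => ?_)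
    measurableSet_Ioi
  simp only [rpow_one, neg_mul]

lemma integrableOn_one_sub_rpow_mul_exp_neg_mul {s r : ℝ} (hs : -1 < s) (hr : 0 < r) :
    IntegrableOn (fun u : ℝ => (1 - u) ^ s * exp (-(r * (1 - u)))) (Ioo 0 1) := by
  have h : IntervalIntegrable (fun x : ℝ => x ^ s * exp (-(r * x))) volume 0 1 :=
    (intervalIntegrable_iff_integrableOn_Ioc_of_le zero_le_one).2
      ((integrableOn_rpow_mul_exp_neg_mul hs hr).mono_set Ioc_subset_Ioi_self)
  have h' := (h.comp_sub_left 1).symm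
  rw [sub_zero, sub_self] at h'
  exact (intervalIntegrable_iff_integrableOn_Ioo_of_le zero_le_one).1 h'

lemma integral_one_sub_rpow_mul_exp_neg_mul_le {s r : ℝ} (hs : -1 < s) (hr : 0 < r) :
    ∫ u in Ioo 0 1, (1 - u) ^ s * exp (-(r * (1 - u))) ≤ (1 / r) ^ (s + 1) * Gamma (s + 1) := by
  have hGamma := integral_rpow_mul_exp_neg_mul_Ioi (a := s + 1) (by linarith) hr
  rw [add_sub_cancel_right] at hGamma
  calc ∫ u in Ioo 0 1, (1 - u) ^ s * exp (-(r * (1 - u)))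
      = ∫ x in Ioc 0 1, x ^ s * exp (-(r * x)) := by
        rw [← integral_Ioc_eq_integral_Ioo, ← intervalIntegral.integral_of_le zero_le_one,
          intervalIntegral.integral_comp_sub_left (fun x => x ^ s * exp (-(r * x))), sub_zero,
          sub_self, intervalIntegral.integral_of_le zero_le_one]
    _ ≤ ∫ x in Ioi 0, x ^ s * exp (-(r * x)) :=
        setIntegral_mono_set (integrableOn_rpow_mul_exp_neg_mul hs hr)
          ((ae_restrict_mem measurableSet_Ioi).mono fun x hx => by
            have := mem_Ioi.1 hx
            positivity)
          Ioc_subset_Ioi_self.eventuallyLE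
    _ = (1 / r) ^ (s + 1) * Gamma (s + 1) := hGamma

variable {t a : ℝ} {k : ℕ} {u : ℝ}

lemma betaLogKernel_nonneg (hu : u ∈ Ioo (0 : ℝ) 1) : 0 ≤ betaLogKernel t a k u := by
  have hlog : 0 ≤ -log (1 - u) := hu.1.le.trans (le_neg_log_one_sub hu.2)
  have h1u : 0 ≤ 1 - u := by linarith [hu.2]
  exact div_nonneg (mul_nonneg (pow_nonneg hu.1.le k) (rpow_nonneg h1u t)) (rpow_nonneg hlog a)

lemma measurable_betaLogKernel : Measurable (betaLogKernel t a k) := by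
  unfold betaLogKernel
  fun_prop

lemma betaLogKernel_le_rpow (ht : 0 ≤ t) (ha : 0 ≤ a) (hu : u ∈ Ioo (0 : ℝ) 1) :
    betaLogKernel t a k u ≤ u ^ ((k : ℝ) - a) := by
  obtain ⟨hu0, hu1⟩ := hu
  have hnum : u ^ k * (1 - u) ^ t ≤ u ^ k :=
    mul_le_of_le_one_right (pow_nonneg hu0.le k) (rpow_le_one (by linarith) (by linarith) ht)
  calc betaLogKernel t a k u ≤ u ^ k / u ^ a :=
        div_le_div₀ (pow_nonneg hu0.le k) hnum (rpow_pos_of_pos hu0 a)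
          (rpow_le_rpow hu0.le (le_neg_log_one_sub hu1) ha)
    _ = u ^ ((k : ℝ) - a) := by rw [rpow_sub hu0, rpow_natCast]

lemma integrableOn_betaLogKernel (ht : 0 ≤ t) (ha : 0 ≤ a) (hka : a < k + 1) :
    IntegrableOn (betaLogKernel t a k) (Ioo 0 1) := by
  have hrpow : IntegrableOn (fun u : ℝ => u ^ ((k : ℝ) - a)) (Ioo 0 1) :=
    (intervalIntegrable_iff_integrableOn_Ioo_of_le zero_le_one).1
      (intervalIntegral.intervalIntegrable_rpow' (by linarith))
  refine hrpow.mono' measurable_betaLogKernel.aestronglyMeasurable ?_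
  filter_upwards [ae_restrict_mem measurableSet_Ioo] with u hu
  rw [norm_of_nonneg (betaLogKernel_nonneg hu)]
  exact betaLogKernel_le_rpow ht ha hu

lemma betaLogKernel_le_of_le_one_sub {δ : ℝ} (ht : 0 ≤ t) (ha : 0 ≤ a) (hka : a ≤ k)
    (hδ : δ ≤ 1 / 2) (hu : u ∈ Ioo (0 : ℝ) 1) (huδ : u ≤ 1 - δ) :
    betaLogKernel t a k u ≤ 2 ^ a * exp (-(k * δ)) := by
  have hδ' : 0 < 1 - δ := by linarith
  calc betaLogKernel t a k u ≤ u ^ ((k : ℝ) - a) := betaLogKernel_le_rpow ht ha hu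
    _ ≤ (1 - δ) ^ ((k : ℝ) - a) := rpow_le_rpow hu.1.le huδ (by linarith)
    _ = (1 - δ) ^ k / (1 - δ) ^ a := by rw [rpow_sub hδ', rpow_natCast]
    _ ≤ exp (-(k * δ)) / (1 / 2) ^ a := by
        refine div_le_div₀ (exp_nonneg _) ?_ (by positivity)
          (rpow_le_rpow (by norm_num) (by linarith) ha)
        simpa using pow_le_exp_neg_mul_one_sub hδ'.le k
    _ = 2 ^ a * exp (-(k * δ)) := by
        rw [div_rpow zero_le_one zero_le_two, one_rpow]; field_simp

lemma betaLogKernel_le_of_one_sub_lt {δ : ℝ} (ha : 0 ≤ a) (hδ : δ < 1)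
    (hu : u ∈ Ioo (0 : ℝ) 1) (huδ : 1 - u < δ) :
    betaLogKernel t a k u ≤ (1 - u) ^ t * exp (-(k * (1 - u))) / (-log δ) ^ a := by
  have h1u : 0 < 1 - u := by linarith [hu.2]
  have hlogδ : 0 < -log δ := neg_pos.2 (log_neg (h1u.trans huδ) hδ)
  have hnum : u ^ k * (1 - u) ^ t ≤ (1 - u) ^ t * exp (-(k * (1 - u))) := by
    rw [mul_comm]
    exact mul_le_mul_of_nonneg_left (pow_le_exp_neg_mul_one_sub hu.1.le k) (rpow_nonneg h1u.le t)
  exact div_le_div₀ (by positivity) hnum (rpow_pos_of_pos hlogδ a)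
    (rpow_le_rpow hlogδ.le (neg_le_neg (log_le_log h1u huδ.le)) ha)

lemma betaLogKernel_le_majorant {δ : ℝ} (ht : 0 ≤ t) (ha : 0 ≤ a) (hka : a ≤ k)
    (hδ0 : 0 < δ) (hδ : δ ≤ 1 / 2) (hu : u ∈ Ioo (0 : ℝ) 1) :
    betaLogKernel t a k u ≤
      2 ^ a * exp (-(k * δ)) + (1 - u) ^ t * exp (-(k * (1 - u))) / (-log δ) ^ a := by
  have hlogδ : 0 < -log δ := neg_pos.2 (log_neg hδ0 (by linarith))
  have h1u : 0 ≤ 1 - u := by linarith [hu.2]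
  rcases le_or_gt u (1 - δ) with huδ | huδ
  · have := betaLogKernel_le_of_le_one_sub ht ha hka hδ hu huδ
    have : 0 ≤ (1 - u) ^ t * exp (-(k * (1 - u))) / (-log δ) ^ a := by positivity
    linarith
  · have := betaLogKernel_le_of_one_sub_lt (t := t) (k := k) (δ := δ) ha (by linarith) hu
      (by linarith)
    have : 0 ≤ 2 ^ a * exp (-(k * δ)) := by positivity
    linarith

lemma integral_betaLogKernel_le {δ : ℝ} (ht : 0 ≤ t) (ha : 0 ≤ a) (hk : 0 < k)
    (hka : a ≤ k) (hδ0 : 0 < δ) (hδ : δ ≤ 1 / 2) :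
    ∫ u in Ioo 0 1, betaLogKernel t a k u ≤
      2 ^ a * exp (-(k * δ)) + (1 / k) ^ (t + 1) * Gamma (t + 1) / (-log δ) ^ a := by
  have hk' : (0 : ℝ) < k := by exact_mod_cast hk
  have hlogδ : 0 < -log δ := neg_pos.2 (log_neg hδ0 (by linarith))
  have hexp := integrableOn_one_sub_rpow_mul_exp_neg_mul (s := t) (by linarith) hk'
  calc ∫ u in Ioo 0 1, betaLogKernel t a k u
      ≤ ∫ u in Ioo 0 1,
          2 ^ a * exp (-(k * δ)) + (1 - u) ^ t * exp (-(k * (1 - u))) / (-log δ) ^ a :=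
        setIntegral_mono_of_nonneg (fun _ hu => betaLogKernel_nonneg hu)
          (fun _ hu => betaLogKernel_le_majorant ht ha hka hδ0 hδ hu)
          ((integrable_const _).add (hexp.div_const _))
    _ = 2 ^ a * exp (-(k * δ)) +
          (∫ u in Ioo 0 1, (1 - u) ^ t * exp (-(k * (1 - u)))) / (-log δ) ^ a := by
        rw [integral_add (integrable_const _) (hexp.div_const _), integral_div,
          setIntegral_const, Real.volume_real_Ioo_of_le zero_le_one, sub_zero, one_smul]
    _ ≤ 2 ^ a * exp (-(k * δ)) + (1 / k) ^ (t + 1) * Gamma (t + 1) / (-log δ) ^ a := by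
        gcongr
        exact integral_one_sub_rpow_mul_exp_neg_mul_le (by linarith) hk'

lemma scaled_integral_betaLogKernel_le (ht : 0 ≤ t) (ha : 0 ≤ a) (hk : 4 ≤ k)
    (hka : a ≤ k) :
    (k : ℝ) ^ (1 + t) * log k ^ a * ∫ u in Ioo 0 1, betaLogKernel t a k u ≤
      2 ^ a * ((k : ℝ) ^ (1 + t) * log k ^ a * exp (-√k)) + 2 ^ a * Gamma (t + 1) := by
  have hk' : (4 : ℝ) ≤ k := by exact_mod_cast hk
  have hlogk : 0 < log k := log_pos (by linarith)
  have hsqrt : 2 ≤ √(k : ℝ) := le_sqrt_of_sq_le (by linarith)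
  have hδ : (√(k : ℝ))⁻¹ ≤ 1 / 2 := by
    rw [one_div]; exact inv_anti₀ two_pos hsqrt
  have hmul : (k : ℝ) * (√(k : ℝ))⁻¹ = √k := by
    rw [← div_eq_mul_inv, div_sqrt]
  have hlog : -log (√(k : ℝ))⁻¹ = log k / 2 := by
    rw [log_inv, neg_neg, log_sqrt (by linarith)]
  have h := integral_betaLogKernel_le ht ha (by omega) hka (by positivity) hδ
  rw [hmul, hlog] at h
  calc (k : ℝ) ^ (1 + t) * log k ^ a * ∫ u in Ioo 0 1, betaLogKernel t a k u
      ≤ (k : ℝ) ^ (1 + t) * log k ^ a *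
          (2 ^ a * exp (-√k) + (1 / k) ^ (t + 1) * Gamma (t + 1) / (log k / 2) ^ a) := by
        gcongr
    _ = 2 ^ a * ((k : ℝ) ^ (1 + t) * log k ^ a * exp (-√k)) + 2 ^ a * Gamma (t + 1) := by
        rw [div_rpow hlogk.le zero_le_two, one_div, inv_rpow (by linarith), add_comm t 1]
        field_simp

lemma le_betaLogKernel_of_mem_Ioo (ht : 0 ≤ t) (ha : 0 ≤ a) (hk : 4 ≤ k)
    (hu : u ∈ Ioo (1 - 2 / (k : ℝ)) (1 - 1 / k)) :
    exp (-4) * (1 / k) ^ t / log k ^ a ≤ betaLogKernel t a k u := by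
  have hk' : (4 : ℝ) ≤ k := by exact_mod_cast hk
  obtain ⟨hu2, hu1⟩ := hu
  have hk0 : 0 < 1 / (k : ℝ) := by positivity
  have h1u : 1 / (k : ℝ) < 1 - u := by linarith
  have hu0 : 1 / 2 ≤ u := by
    have : 2 / (k : ℝ) ≤ 1 / 2 := by rw [div_le_div_iff₀ (by linarith) two_pos]; linarith
    linarith
  have hupow : exp (-4) ≤ u ^ k := by
    refine le_trans (exp_le_exp.2 ?_) (exp_neg_two_mul_one_sub_le_pow hu0 (by linarith) k)
    have : (k : ℝ) * (1 - u) ≤ 2 := by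
      rw [← le_div_iff₀' (by linarith)]; linarith
    linarith
  have hupos : 0 < u := by linarith
  have hlog : 0 < -log (1 - u) := hupos.trans_le (le_neg_log_one_sub (by linarith))
  have hlogk : -log (1 - u) ≤ log k := by
    have := log_le_log (by positivity) h1u.le
    rwa [one_div, log_inv, neg_le] at this
  exact div_le_div₀ (mul_nonneg (pow_nonneg hupos.le k) (rpow_nonneg (by linarith) t))
    (mul_le_mul hupow (rpow_le_rpow (by positivity) h1u.le ht) (by positivity) (by positivity))
    (rpow_pos_of_pos hlog a) (rpow_le_rpow hlog.le hlogk ha)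

lemma exp_neg_four_le_scaled_integral_betaLogKernel (ht : 0 ≤ t) (ha : 0 ≤ a) (hk : 4 ≤ k)
    (hka : a < k + 1) :
    exp (-4) ≤ (k : ℝ) ^ (1 + t) * log k ^ a * ∫ u in Ioo 0 1, betaLogKernel t a k u := by
  have hk' : (4 : ℝ) ≤ k := by exact_mod_cast hk
  have hlogk : 0 < log k := log_pos (by linarith)
  have hJ : Ioo (1 - 2 / (k : ℝ)) (1 - 1 / k) ⊆ Ioo 0 1 := by
    have h2 : 2 / (k : ℝ) < 1 := by rw [div_lt_one (by linarith)]; linarith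
    have h1 : 0 < 1 / (k : ℝ) := by positivity
    exact Ioo_subset_Ioo (by linarith) (by linarith)
  have hvol : volume.real (Ioo (1 - 2 / (k : ℝ)) (1 - 1 / k)) = 1 / k := by
    rw [Real.volume_real_Ioo_of_le (by gcongr; norm_num)]; ring
  have hint := integrableOn_betaLogKernel (t := t) (k := k) ht ha hka
  have hJint : exp (-4) * (1 / k) ^ t / log k ^ a * (1 / k) ≤
      ∫ u in Ioo 0 1, betaLogKernel t a k u :=
    calc exp (-4) * (1 / k) ^ t / log k ^ a * (1 / k)
        ≤ ∫ u in Ioo (1 - 2 / (k : ℝ)) (1 - 1 / k), betaLogKernel t a k u := by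
          have h := setIntegral_ge_of_const_le_real measurableSet_Ioo (by simp)
            (fun u hu => le_betaLogKernel_of_mem_Ioo ht ha hk hu) (hint.mono_set hJ)
          rwa [hvol] at h
      _ ≤ ∫ u in Ioo 0 1, betaLogKernel t a k u :=
          setIntegral_mono_set hint
            ((ae_restrict_mem measurableSet_Ioo).mono fun _ hu => betaLogKernel_nonneg hu)
            hJ.eventuallyLE
  calc exp (-4)
      = (k : ℝ) ^ (1 + t) * log k ^ a * (exp (-4) * (1 / k) ^ t / log k ^ a * (1 / k)) := by
        rw [one_div, inv_rpow (by linarith), rpow_add (by linarith), rpow_one]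
        field_simp
    _ ≤ _ := by gcongr

end

theorem beta_log_integral_bounds_general (t a : ℝ) (ht0 : 0 ≤ t) (ha : 0 < a) :
    ∃ C₁ C₂ : ℝ, 0 < C₁ ∧ 0 < C₂ ∧ ∃ k₀ : ℕ, ∀ k : ℕ, k₀ ≤ k →
      C₁ < (k : ℝ) ^ ((1 : ℝ) + t) * Real.log k ^ a *
          ∫ u in Set.Ioo (0 : ℝ) 1, u ^ k * (1 - u) ^ t / (-Real.log (1 - u)) ^ a ∧
      (k : ℝ) ^ ((1 : ℝ) + t) * Real.log k ^ a *
          ∫ u in Set.Ioo (0 : ℝ) 1, u ^ k * (1 - u) ^ t / (-Real.log (1 - u)) ^ a < C₂ := by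
  have hsmall := ((tendsto_rpow_mul_log_rpow_mul_exp_neg_sqrt (1 + t) ha.le).comp
    tendsto_natCast_atTop_atTop).eventually_lt_const one_pos
  obtain ⟨k₀, hk₀⟩ := eventually_atTop.1 <| hsmall.and <|
    (eventually_ge_atTop 4).and (tendsto_natCast_atTop_atTop.eventually_ge_atTop a)
  refine ⟨Real.exp (-4) / 2, 2 ^ a * (1 + Real.Gamma (t + 1)) + 1, by positivity, by positivity,
    k₀, fun k hk => ?_⟩
  obtain ⟨hsmall_k, hk4, hka⟩ := hk₀ k hk
  have hlower := exp_neg_four_le_scaled_integral_betaLogKernel ht0 ha.le hk4 (by linarith)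
  have hupper := scaled_integral_betaLogKernel_le ht0 ha.le hk4 hka
  have hsmall_k' : 2 ^ a * ((k : ℝ) ^ (1 + t) * Real.log k ^ a * Real.exp (-√k)) ≤ 2 ^ a :=
    mul_le_of_le_one_right (by positivity) hsmall_k.le
  unfold betaLogKernel at hlower hupper
  exact ⟨by linarith [Real.exp_pos (-4)], by linarith⟩

/-- For `0 ≤ t < 1` and `a > 0`, there exist positive constants `C₁, C₂` and `k₀` with
`C₁ < k^{1+t} (log k)^a ∫_0^1 u^k (1-u)^t / (-log(1-u))^a du < C₂` for all `k ≥ k₀`. -/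
theorem beta_log_integral_bounds (t a : ℝ) (ht0 : 0 ≤ t) (ht1 : t < 1) (ha : 0 < a) :
    ∃ C₁ C₂ : ℝ, 0 < C₁ ∧ 0 < C₂ ∧ ∃ k₀ : ℕ, ∀ k : ℕ, k₀ ≤ k →
      C₁ < (k : ℝ) ^ ((1 : ℝ) + t) * Real.log k ^ a *
          ∫ u in Set.Ioo (0 : ℝ) 1, u ^ k * (1 - u) ^ t / (-Real.log (1 - u)) ^ a ∧
      (k : ℝ) ^ ((1 : ℝ) + t) * Real.log k ^ a *
          ∫ u in Set.Ioo (0 : ℝ) 1, u ^ k * (1 - u) ^ t / (-Real.log (1 - u)) ^ a < C₂ :=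
  beta_log_integral_bounds_general t a ht0 ha
end

section
/- Let F be in the NCP class (all partial maxima spacings pairwise non-positively correlated, for every sample size). Then the variance of the partial maxima BLUE L_2 of the scale parameter θ_2 satisfies Var[L_2] ≤ θ_2² / Σ_{k=1}^{n-1} (m_k²/s_k²), where m_k = E[Z_k] and s_k² = Var[Z_k] are the mean and variance of the k-th partial maxima spacing from the standard distribution F. -/
/-!
The spacings `Z k = Y (k + 1) - Y k` are nonnegative, with means `m k ≥ 0`. For weights `a` with
`∑ a k * m k = 1`, summation by parts writes `∑ a k * Z k` as a linear unbiased estimator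
`∑ d i * Y i` of the scale, so the BLUE has variance at most `Var[∑ a k * Z k]`. The weights
`a k = m k / (s k ^ 2 * C)`, with `C = ∑ m k ^ 2 / s k ^ 2`, are nonnegative, so under NCP this
variance is at most `∑ a k ^ 2 * s k ^ 2 = 1 / C`. If `C = 0` (where Lean reads `1 / C` as `0`),
unbiasedness of the BLUE forces some `m k ≠ 0`, hence `s k = 0`, and `Z k / m k` is an unbiased
estimator of variance zero.
-/

open MeasureTheory ProbabilityTheory Finset

theorem sum_Icc_by_parts {R : Type*} [CommRing R] (a g : ℕ → R) (N : ℕ) :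
    ∑ i ∈ Icc 1 (N + 1), (a (i - 1) - a i) * g i =
      ∑ k ∈ Icc 1 N, a k * (g (k + 1) - g k) + a 0 * g 1 - a (N + 1) * g (N + 1) := by
  induction N with
  | zero => simp; ring
  | succ N ih =>
    rw [sum_Icc_succ_top (by omega), ih, sum_Icc_succ_top (by omega), Nat.add_sub_cancel]
    ring

theorem exists_sum_mul_eq_sum_mul_sub {R : Type*} [CommRing R] (a : ℕ → R) (n : ℕ) :
    ∃ d : ℕ → R, ∀ g : ℕ → R,
      ∑ i ∈ Icc 1 n, d i * g i = ∑ k ∈ Icc 1 (n - 1), a k * (g (k + 1) - g k) := by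
  classical
  let b : ℕ → R := fun k => if k ∈ Icc 1 (n - 1) then a k else 0
  refine ⟨fun i => b (i - 1) - b i, fun g => ?_⟩
  rcases n with _ | N
  · simp
  · have hb : ∀ k ∈ Icc 1 N, b k = a k := fun k hk => if_pos hk
    have hb0 : b 0 = 0 := if_neg (by simp)
    have hbN : b (N + 1) = 0 := if_neg (by simp)
    rw [Nat.add_sub_cancel, sum_Icc_by_parts, hb0, hbN, zero_mul, zero_mul, add_zero, sub_zero]
    exact sum_congr rfl fun k hk => by rw [hb k hk]

theorem exists_succ_ne_of_sum_mul_ne_zero {R : Type*} [CommRing R] {c μ : ℕ → R} {n : ℕ}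
    (hc : ∑ i ∈ Icc 1 n, c i = 0) (hcμ : ∑ i ∈ Icc 1 n, c i * μ i ≠ 0) :
    ∃ k ∈ Icc 1 (n - 1), μ (k + 1) ≠ μ k := by
  by_contra! h
  have hconst : ∀ i, 1 ≤ i → i ≤ n → μ i = μ 1 := by
    intro i hi
    induction i, hi using Nat.le_induction with
    | base => exact fun _ => rfl
    | succ i hi ih => exact fun hin => by rw [h i (mem_Icc.2 ⟨hi, by omega⟩), ih (by omega)]
  apply hcμ
  rw [sum_congr rfl fun i hi => by rw [hconst i (mem_Icc.1 hi).1 (mem_Icc.1 hi).2], ← sum_mul,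
    hc, zero_mul]

theorem exists_nonneg_weights_sum_sq_mul_le {ι : Type*} (s : Finset ι) {m v : ι → ℝ}
    (hm : ∀ k ∈ s, 0 ≤ m k) (hv : ∀ k ∈ s, 0 ≤ v k) (hne : ∃ k ∈ s, m k ≠ 0) :
    ∃ a : ι → ℝ, (∀ k ∈ s, 0 ≤ a k) ∧ ∑ k ∈ s, a k * m k = 1 ∧
      ∑ k ∈ s, a k ^ 2 * v k ≤ 1 / ∑ k ∈ s, m k ^ 2 / v k := by
  classical
  set C := ∑ k ∈ s, m k ^ 2 / v k
  have hterm : ∀ k ∈ s, 0 ≤ m k ^ 2 / v k := fun k hk => div_nonneg (sq_nonneg _) (hv k hk)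
  rcases (sum_nonneg hterm).eq_or_lt with hC | hC
  · obtain ⟨k, hk, hmk⟩ := hne
    have hvk : v k = 0 := by
      simpa [hmk] using (sum_eq_zero_iff_of_nonneg hterm).1 hC.symm k hk
    refine ⟨fun j => if j = k then 1 / m k else 0, fun j _ => ?_, ?_, ?_⟩
    · dsimp only
      split_ifs
      · exact one_div_nonneg.2 (hm k hk)
      · exact le_rfl
    · simp [hk, hmk]
    · simpa [hk, hvk] using hC.le
  · refine ⟨fun k => m k / v k / C, fun k hk => div_nonneg (div_nonneg (hm k hk) (hv k hk)) hC.le,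
      ?_, le_of_eq ?_⟩
    · calc ∑ k ∈ s, m k / v k / C * m k = (∑ k ∈ s, m k ^ 2 / v k) / C := by
            rw [sum_div]; exact sum_congr rfl fun k _ => by ring
        _ = 1 := div_self hC.ne'
    · calc ∑ k ∈ s, (m k / v k / C) ^ 2 * v k = (∑ k ∈ s, m k ^ 2 / v k) / C ^ 2 := by
            rw [sum_div]
            refine sum_congr rfl fun k _ => ?_
            rcases eq_or_ne (v k) 0 with hvk | hvk
            · simp [hvk]
            · field_simp
        _ = 1 / C := by rw [sq, ← div_div, div_self hC.ne']

theorem variance_sum_mul_le_of_covariance_nonpos {Ω ι : Type*} [MeasurableSpace Ω]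
    {μ : Measure Ω} [IsFiniteMeasure μ] {s : Finset ι} {X : ι → Ω → ℝ} {a : ι → ℝ}
    (hX : ∀ i ∈ s, MemLp (X i) 2 μ) (ha : ∀ i ∈ s, 0 ≤ a i)
    (hcov : ∀ i ∈ s, ∀ j ∈ s, i ≠ j → cov[X i, X j; μ] ≤ 0) :
    Var[fun ω => ∑ i ∈ s, a i * X i ω; μ] ≤ ∑ i ∈ s, a i ^ 2 * Var[X i; μ] := by
  classical
  rw [variance_fun_sum' (X := fun i ω => a i * X i ω) fun i hi => (hX i hi).const_mul (a i)]
  refine sum_le_sum fun i hi => ?_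
  rw [← add_sum_erase s _ hi, covariance_const_mul_left, covariance_const_mul_right,
    covariance_self (hX i hi).aemeasurable]
  have hoff : ∑ j ∈ s.erase i, cov[fun ω => a i * X i ω, fun ω => a j * X j ω; μ] ≤ 0 := by
    refine sum_nonpos fun j hj => ?_
    obtain ⟨hji, hj⟩ := mem_erase.1 hj
    rw [covariance_const_mul_left, covariance_const_mul_right]
    exact mul_nonpos_of_nonneg_of_nonpos (ha i hi)
      (mul_nonpos_of_nonneg_of_nonpos (ha j hj) (hcov i hi j hj hji.symm))
  nlinarith

def IsUnbiasedScaleEstimator {Ω ι : Type*} [MeasurableSpace Ω] (P : Measure Ω)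
    (Y : ι → Ω → ℝ) (s : Finset ι) (c : ι → ℝ) : Prop :=
  ∀ θ₁ θ₂ : ℝ, 0 < θ₂ → ∫ ω, ∑ i ∈ s, c i * (θ₁ + θ₂ * Y i ω) ∂P = θ₂

theorem isUnbiasedScaleEstimator_iff {Ω ι : Type*} [MeasurableSpace Ω] {P : Measure Ω}
    [IsProbabilityMeasure P] {Y : ι → Ω → ℝ} {s : Finset ι} (c : ι → ℝ)
    (hY : ∀ i ∈ s, Integrable (Y i) P) :
    IsUnbiasedScaleEstimator P Y s c ↔
      ∑ i ∈ s, c i = 0 ∧ ∑ i ∈ s, c i * ∫ ω, Y i ω ∂P = 1 := by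
  have hmean : ∀ θ₁ θ₂ : ℝ, ∫ ω, ∑ i ∈ s, c i * (θ₁ + θ₂ * Y i ω) ∂P =
      θ₁ * ∑ i ∈ s, c i + θ₂ * ∑ i ∈ s, c i * ∫ ω, Y i ω ∂P := by
    intro θ₁ θ₂
    rw [integral_finsetSum s fun i hi => by have := hY i hi; fun_prop,
      mul_sum, mul_sum, ← sum_add_distrib]
    refine sum_congr rfl fun i hi => ?_
    rw [integral_const_mul, integral_add (integrable_const θ₁) ((hY i hi).const_mul θ₂),
      integral_const_mul, integral_const, probReal_univ, one_smul]
    ring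
  simp only [IsUnbiasedScaleEstimator, hmean]
  constructor
  · intro h
    have h₀ := h 0 1 one_pos
    have h₁ := h 1 1 one_pos
    constructor <;> linarith
  · rintro ⟨h₀, h₁⟩ θ₁ θ₂ _
    rw [h₀, h₁]
    ring

theorem memLp_partialMax_s16 {Ω : Type*} [MeasurableSpace Ω] {P : Measure Ω} {X Y : ℕ → Ω → ℝ}
    (hmeas : ∀ k, Measurable (X k)) (hid : ∀ k, P.map (X k) = P.map (X 1))
    (hL2 : MemLp (X 1) 2 P) (hY1 : Y 1 = X 1)
    (hYs : ∀ k, 1 ≤ k → ∀ ω, Y (k + 1) ω = max (Y k ω) (X (k + 1) ω)) {k : ℕ} (hk : 1 ≤ k) :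
    MemLp (Y k) 2 P := by
  induction k, hk using Nat.le_induction with
  | base => rwa [hY1]
  | succ k hk ih =>
    have hX : MemLp (X (k + 1)) 2 P :=
      (IdentDistrib.mk (hmeas 1).aemeasurable (hmeas (k + 1)).aemeasurable
        (hid (k + 1)).symm).memLp_snd hL2
    rw [show Y (k + 1) = Y k ⊔ X (k + 1) from funext (hYs k hk)]
    exact ih.sup hX

section Spacings

variable {Ω : Type*} [MeasurableSpace Ω] {P : Measure Ω} {Y Z : ℕ → Ω → ℝ}

theorem integral_spacing (hZ : ∀ k, 1 ≤ k → ∀ ω, Z k ω = Y (k + 1) ω - Y k ω) {k : ℕ}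
    (hk : 1 ≤ k) (hYk : Integrable (Y k) P) (hYk' : Integrable (Y (k + 1)) P) :
    ∫ ω, Z k ω ∂P = ∫ ω, Y (k + 1) ω ∂P - ∫ ω, Y k ω ∂P := by
  rw [← integral_sub hYk' hYk]
  exact integral_congr_ae (.of_forall (hZ k hk))

theorem exists_isUnbiasedScaleEstimator_eq_sum_spacings [IsProbabilityMeasure P]
    (hZ : ∀ k, 1 ≤ k → ∀ ω, Z k ω = Y (k + 1) ω - Y k ω) {n : ℕ}
    (hY : ∀ i ∈ Icc 1 n, Integrable (Y i) P) {a : ℕ → ℝ}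
    (ha : ∑ k ∈ Icc 1 (n - 1), a k * ∫ ω, Z k ω ∂P = 1) :
    ∃ d : ℕ → ℝ, IsUnbiasedScaleEstimator P Y (Icc 1 n) d ∧
      (fun ω => ∑ i ∈ Icc 1 n, d i * Y i ω) = fun ω => ∑ k ∈ Icc 1 (n - 1), a k * Z k ω := by
  obtain ⟨d, hd⟩ := exists_sum_mul_eq_sum_mul_sub a n
  refine ⟨d, (isUnbiasedScaleEstimator_iff d hY).2 ⟨by simpa using hd 1, ?_⟩, funext fun ω => ?_⟩
  · rw [hd, ← ha]
    refine sum_congr rfl fun k hk => ?_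
    obtain ⟨hk₁, hkn⟩ := mem_Icc.1 hk
    rw [integral_spacing hZ hk₁ (hY k (mem_Icc.2 ⟨hk₁, by omega⟩))
      (hY (k + 1) (mem_Icc.2 ⟨by omega, by omega⟩))]
  · rw [hd fun i => Y i ω]
    exact sum_congr rfl fun k hk => by rw [hZ k (mem_Icc.1 hk).1 ω]

end Spacings

theorem variance_bound_partial_maxima_BLUE_scale_general
    {Ω : Type*} [MeasurableSpace Ω] (P : Measure Ω) [IsProbabilityMeasure P]
    (X : ℕ → Ω → ℝ) (hmeas : ∀ k, Measurable (X k))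
    (hid : ∀ k, P.map (X k) = P.map (X 1))
    (hL2 : MemLp (X 1) 2 P)
    (Y : ℕ → Ω → ℝ) (hY1 : Y 1 = X 1)
    (hYs : ∀ k, 1 ≤ k → ∀ ω, Y (k + 1) ω = max (Y k ω) (X (k + 1) ω))
    (Z : ℕ → Ω → ℝ) (hZ : ∀ k, 1 ≤ k → ∀ ω, Z k ω = Y (k + 1) ω - Y k ω)
    -- NCP: partial maxima spacings are pairwise non-positively correlated
    (hNCP : ∀ i j : ℕ, 1 ≤ i → 1 ≤ j → i ≠ j →
      (∫ ω, (Z i ω - ∫ ω', Z i ω' ∂P) * (Z j ω - ∫ ω', Z j ω' ∂P) ∂P) ≤ 0)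
    (n : ℕ) (θ₂ : ℝ)
    (c : ℕ → ℝ)
    -- `c` gives an unbiased linear estimator of the scale parameter, for all parameter values
    (hunb : ∀ θ₁' θ₂' : ℝ, 0 < θ₂' →
      (∫ ω, ∑ i ∈ Finset.Icc 1 n, c i * (θ₁' + θ₂' * Y i ω) ∂P) = θ₂')
    -- `c` has minimal variance among all linear unbiased estimators (i.e. it is the BLUE)
    (hblue : ∀ d : ℕ → ℝ,
      (∀ θ₁' θ₂' : ℝ, 0 < θ₂' →
        (∫ ω, ∑ i ∈ Finset.Icc 1 n, d i * (θ₁' + θ₂' * Y i ω) ∂P) = θ₂') →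
      variance (fun ω => ∑ i ∈ Finset.Icc 1 n, c i * Y i ω) P ≤
        variance (fun ω => ∑ i ∈ Finset.Icc 1 n, d i * Y i ω) P) :
    θ₂ ^ 2 * variance (fun ω => ∑ i ∈ Finset.Icc 1 n, c i * Y i ω) P ≤
      θ₂ ^ 2 / ∑ k ∈ Finset.Icc 1 (n - 1),
        (∫ ω, Z k ω ∂P) ^ 2 / variance (Z k) P := by
  have hYL2 : ∀ k, 1 ≤ k → MemLp (Y k) 2 P := fun k hk => memLp_partialMax_s16 hmeas hid hL2 hY1 hYs hk
  have hZL2 : ∀ k, 1 ≤ k → MemLp (Z k) 2 P := fun k hk => by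
    rw [show Z k = Y (k + 1) - Y k from funext (hZ k hk)]
    exact (hYL2 (k + 1) (by omega)).sub (hYL2 k hk)
  have hYint : ∀ k, 1 ≤ k → Integrable (Y k) P := fun k hk => (hYL2 k hk).integrable one_le_two
  have hmean_nonneg : ∀ k, 1 ≤ k → 0 ≤ ∫ ω, Z k ω ∂P := fun k hk => integral_nonneg fun ω => by
    rw [hZ k hk ω, hYs k hk ω]
    exact sub_nonneg.2 (le_max_left _ _)
  obtain ⟨hc₀, hc₁⟩ :=
    (isUnbiasedScaleEstimator_iff c fun i hi => hYint i (mem_Icc.1 hi).1).1 hunb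
  obtain ⟨k, hk, hmk⟩ := exists_succ_ne_of_sum_mul_ne_zero hc₀ (hc₁.symm ▸ one_ne_zero)
  have hmk' : ∫ ω, Z k ω ∂P ≠ 0 := by
    rw [integral_spacing hZ (mem_Icc.1 hk).1 (hYint k (mem_Icc.1 hk).1) (hYint _ (by omega))]
    exact sub_ne_zero.2 hmk
  obtain ⟨a, ha, ham, hav⟩ := exists_nonneg_weights_sum_sq_mul_le (Icc 1 (n - 1))
    (fun k hk => hmean_nonneg k (mem_Icc.1 hk).1) (fun k _ => variance_nonneg (Z k) P)
    ⟨k, hk, hmk'⟩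
  obtain ⟨d, hd, hdY⟩ := exists_isUnbiasedScaleEstimator_eq_sum_spacings hZ
    (fun i hi => hYint i (mem_Icc.1 hi).1) ham
  calc θ₂ ^ 2 * Var[fun ω => ∑ i ∈ Icc 1 n, c i * Y i ω; P]
      ≤ θ₂ ^ 2 * Var[fun ω => ∑ k ∈ Icc 1 (n - 1), a k * Z k ω; P] := by
        rw [← hdY]
        gcongr
        exact hblue d hd
    _ ≤ θ₂ ^ 2 * ∑ k ∈ Icc 1 (n - 1), a k ^ 2 * Var[Z k; P] := by
        gcongr
        exact variance_sum_mul_le_of_covariance_nonpos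
          (fun k hk => hZL2 k (mem_Icc.1 hk).1) ha
          (fun i hi j hj hij => hNCP i j (mem_Icc.1 hi).1 (mem_Icc.1 hj).1 hij)
    _ ≤ θ₂ ^ 2 / ∑ k ∈ Icc 1 (n - 1), (∫ ω, Z k ω ∂P) ^ 2 / Var[Z k; P] := by
        rw [div_eq_mul_one_div]
        gcongr

/-- If `F` is in the NCP class, then the variance of the partial maxima BLUE `L₂` of the
scale parameter satisfies `Var[L₂] ≤ θ₂² / Σ_{k=1}^{n-1} m_k²/s_k²`. -/
theorem variance_bound_partial_maxima_BLUE_scale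
    {Ω : Type*} [MeasurableSpace Ω] (P : Measure Ω) [IsProbabilityMeasure P]
    (X : ℕ → Ω → ℝ) (hmeas : ∀ k, Measurable (X k))
    (hindep : iIndepFun X P)
    (hid : ∀ k, P.map (X k) = P.map (X 1))
    (hL2 : MemLp (X 1) 2 P)
    (Y : ℕ → Ω → ℝ) (hY1 : Y 1 = X 1)
    (hYs : ∀ k, 1 ≤ k → ∀ ω, Y (k + 1) ω = max (Y k ω) (X (k + 1) ω))
    (Z : ℕ → Ω → ℝ) (hZ : ∀ k, 1 ≤ k → ∀ ω, Z k ω = Y (k + 1) ω - Y k ω)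
    -- NCP: partial maxima spacings are pairwise non-positively correlated
    (hNCP : ∀ i j : ℕ, 1 ≤ i → 1 ≤ j → i ≠ j →
      (∫ ω, (Z i ω - ∫ ω', Z i ω' ∂P) * (Z j ω - ∫ ω', Z j ω' ∂P) ∂P) ≤ 0)
    (n : ℕ) (hn : 2 ≤ n) (θ₂ : ℝ) (hθ₂ : 0 < θ₂)
    (c : ℕ → ℝ)
    -- `c` gives an unbiased linear estimator of the scale parameter, for all parameter values
    (hunb : ∀ θ₁' θ₂' : ℝ, 0 < θ₂' →
      (∫ ω, ∑ i ∈ Finset.Icc 1 n, c i * (θ₁' + θ₂' * Y i ω) ∂P) = θ₂')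
    -- `c` has minimal variance among all linear unbiased estimators (i.e. it is the BLUE)
    (hblue : ∀ d : ℕ → ℝ,
      (∀ θ₁' θ₂' : ℝ, 0 < θ₂' →
        (∫ ω, ∑ i ∈ Finset.Icc 1 n, d i * (θ₁' + θ₂' * Y i ω) ∂P) = θ₂') →
      variance (fun ω => ∑ i ∈ Finset.Icc 1 n, c i * Y i ω) P ≤
        variance (fun ω => ∑ i ∈ Finset.Icc 1 n, d i * Y i ω) P) :
    θ₂ ^ 2 * variance (fun ω => ∑ i ∈ Finset.Icc 1 n, c i * Y i ω) P ≤
      θ₂ ^ 2 / ∑ k ∈ Finset.Icc 1 (n - 1),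
        (∫ ω, Z k ω ∂P) ^ 2 / variance (Z k) P :=
  variance_bound_partial_maxima_BLUE_scale_general P X hmeas hid hL2 Y hY1 hYs Z hZ hNCP n θ₂ c hunb
    hblue
end
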